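/- arXiv:1603.03855 — 3 statements merged into one kernel-verified Lean document; each statement's English description precedes it below -/
import Mathlib

section
/- Let H be a graph, let k ∈ {0,1}, and let G be the graph obtained from H by subdividing one edge once. If p is a real number such that φ(H − W) ≤ p for every set W of edges of H with |W| = k, then φ(G − W') ≤ p for every set W' of edges of G with |W'| = k. (Here G − W denotes the graph obtained from G by deleting the edges in W.) -/
/-!
Subdividing an edge of a forest, or hanging a new leaf on it, leaves a forest; hence a feedback
vertex set `S` of `H` is also one of the graph obtained by subdividing an edge of `H`, since the
new vertex survives in `G - S` as a subdivision vertex, a leaf or an isolated vertex. Deleting an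
edge of the subdivision `G` of `xy` produces a graph of the same kind: removing an old edge `e`
gives the subdivision of `xy` in `H - e`, and removing an edge at the new vertex gives `H - xy`
with a leaf hung at `x` or at `y`.
-/

open SimpleGraph

namespace InducedForest

/-- A graph is subcubic if every vertex has at most 3 neighbours. -/
def Subcubic {V : Type} (G : SimpleGraph V) : Prop := ∀ v : V, (G.neighborSet v).ncard ≤ 3

/-- A graph is cubic if every vertex has exactly 3 neighbours. -/
def Cubic {V : Type} (G : SimpleGraph V) : Prop := ∀ v : V, (G.neighborSet v).ncard = 3

/-- `S` is a feedback vertex set of `G` iff `G - S` is a forest. -/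
def IsFVS {V : Type} (G : SimpleGraph V) (S : Set V) : Prop := (G.induce Sᶜ).IsAcyclic

/-- `φ(G)`: the minimum size of a feedback vertex set of `G`. -/
noncomputable def fvs {V : Type} (G : SimpleGraph V) : ℕ :=
  sInf {n : ℕ | ∃ S : Set V, IsFVS G S ∧ S.ncard = n}

/-- `a(G)`: the maximum number of vertices of an induced forest in `G`. -/
noncomputable def indForestNum {V : Type} (G : SimpleGraph V) : ℕ :=
  sSup {n : ℕ | ∃ S : Set V, (G.induce S).IsAcyclic ∧ S.ncard = n}

/-- `v` is a cut-vertex of `G`: deleting it increases the number of connected components. -/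
def IsCutVertex {V : Type} (G : SimpleGraph V) (v : V) : Prop :=
  Nat.card G.ConnectedComponent < Nat.card (G.induce {u | u ≠ v}).ConnectedComponent

/-- `B` is a block of `G`: a maximal set of vertices inducing a connected subgraph
without cut-vertices. -/
def IsBlock {V : Type} (G : SimpleGraph V) (B : Set V) : Prop :=
  ((G.induce B).Connected ∧ ∀ v, ¬ IsCutVertex (G.induce B) v) ∧
  ∀ B' : Set V, B ⊆ B' →
    ((G.induce B').Connected ∧ ∀ v, ¬ IsCutVertex (G.induce B') v) → B' = B

/-- 2-connectedness: at least 3 vertices and removing fewer than 2 vertices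
leaves a connected graph. -/
def TwoConnected {V : Type} (G : SimpleGraph V) : Prop :=
  3 ≤ Nat.card V ∧ ∀ s : Set V, s.ncard < 2 → (G.induce sᶜ).Connected

/-- 3-connectedness: at least 4 vertices and removing fewer than 3 vertices
leaves a connected graph. -/
def ThreeConnected {V : Type} (G : SimpleGraph V) : Prop :=
  4 ≤ Nat.card V ∧ ∀ s : Set V, s.ncard < 3 → (G.induce sᶜ).Connected

/-- The graph obtained from `H` by subdividing the edge `xy` once;
the subdivision vertex is `none`. -/
def subdivide {V : Type} (H : SimpleGraph V) (x y : V) : SimpleGraph (Option V) :=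
  SimpleGraph.fromRel (fun p q =>
    match p, q with
    | some u, some v => H.Adj u v ∧ s(u, v) ≠ s(x, y)
    | some u, none => u = x ∨ u = y
    | _, _ => False)

/-- `G` is obtained from `H` by subdividing one edge once. -/
def IsSubdivisionOfOneEdge {V W : Type} (H : SimpleGraph V) (G : SimpleGraph W) : Prop :=
  ∃ x y : V, H.Adj x y ∧ Nonempty (G ≃g subdivide H x y)

/-- The graph obtained from `K` by adding one new vertex (`none`)
joined to all vertices of `S`. -/
def addApex {V : Type} (K : SimpleGraph V) (S : Set V) : SimpleGraph (Option V) :=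
  SimpleGraph.fromRel (fun p q =>
    match p, q with
    | some u, some v => K.Adj u v
    | some u, none => u ∈ S
    | _, _ => False)

/-- `G` is (isomorphic to) `H ∘ (e1, e2, a)`: subdivide `e1` and `e2` once each
(with `e1` subdivided twice if `e1 = e2`) and add a new vertex adjacent to `a` and to the
two subdivision vertices. -/
def IsCircOp {V W : Type} (H : SimpleGraph V) (e1 e2 : Sym2 V) (a : V)
    (G : SimpleGraph W) : Prop :=
  (e1 ≠ e2 ∧ ∃ x1 y1 x2 y2 : V, e1 = s(x1, y1) ∧ e2 = s(x2, y2) ∧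
    Nonempty (G ≃g addApex (subdivide (subdivide H x1 y1) (some x2) (some y2))
      {some (some a), some none, none})) ∨
  (e1 = e2 ∧ ∃ x y : V, e1 = s(x, y) ∧
    Nonempty (G ≃g addApex (subdivide (subdivide H x y) none (some y))
      {some (some a), some none, none}))

/-- The cycle of length `n` (for `n ≥ 3`). -/
def cyc (n : ℕ) : SimpleGraph (ZMod n) :=
  SimpleGraph.fromRel (fun u v => v = u + 1)

/-- The families `F_{i,j}` of graphs (closed under isomorphism):
`F_{i,0} = {C_i}` for `i ≥ 3`; `F_{1,1} = {K_4}`; `F_{j,j}` for `j ≥ 2` is obtained from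
`F_{j-1,j-1}` by subdividing one edge once and then applying the `∘` operation at the
subdivision vertex; and `F_{i,j}` for `i > j ≥ 1` is obtained from `F_{j,j}` by `i - j`
successive single-edge subdivisions. -/
inductive MemF : ℕ → ℕ → ∀ {V : Type}, SimpleGraph V → Prop
  | cycle {i : ℕ} (hi : 3 ≤ i) {V : Type} {G : SimpleGraph V}
      (h : Nonempty (G ≃g cyc i)) : MemF i 0 G
  | k4 {V : Type} {G : SimpleGraph V}
      (h : Nonempty (G ≃g (⊤ : SimpleGraph (Fin 4)))) : MemF 1 1 G
  | circ {j : ℕ} (hj : 2 ≤ j) {V : Type} {H : SimpleGraph V}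
      (hH : MemF (j - 1) (j - 1) H) {x y : V} (hxy : H.Adj x y)
      {e1 e2 : Sym2 (Option V)} (he1 : e1 ∈ (subdivide H x y).edgeSet)
      (he2 : e2 ∈ (subdivide H x y).edgeSet)
      {W : Type} {G : SimpleGraph W}
      (hG : IsCircOp (subdivide H x y) e1 e2 none G) : MemF j j G
  | subd {i j : ℕ} (hj : 1 ≤ j) {V : Type} {H : SimpleGraph V}
      (hH : MemF i j H) {x y : V} (hxy : H.Adj x y) {W : Type} {G : SimpleGraph W}
      (hG : Nonempty (G ≃g subdivide H x y)) : MemF (i + 1) j G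

/-- `K_4^+`: the graph obtained from `K_4` by subdividing one edge once. -/
def K4plus : SimpleGraph (Option (Fin 4)) :=
  subdivide (⊤ : SimpleGraph (Fin 4)) 0 1

/-- `L`: the graph obtained from `K_4` by subdividing once each edge
of a perfect matching. -/
def Lgraph : SimpleGraph (Option (Option (Fin 4))) :=
  subdivide (subdivide (⊤ : SimpleGraph (Fin 4)) 0 1) (some 2) (some 3)

/-- The Petersen graph. -/
def petersen : SimpleGraph (ZMod 5 × Fin 2) :=
  SimpleGraph.fromRel (fun u v =>
    (u.2 = 0 ∧ v.2 = 0 ∧ v.1 = u.1 + 1) ∨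
    (u.2 = 1 ∧ v.2 = 1 ∧ v.1 = u.1 + 2) ∨
    (u.2 = 0 ∧ v.2 = 1 ∧ u.1 = v.1))

/-- `R`: the Petersen graph minus one edge. -/
def Rgraph : SimpleGraph (ZMod 5 × Fin 2) :=
  petersen.deleteEdges {s(((0 : ZMod 5), (0 : Fin 2)), ((1 : ZMod 5), (0 : Fin 2)))}

/-- `Q_3`: the 3-dimensional cube graph. -/
def Q3 : SimpleGraph (Fin 2 × Fin 2 × Fin 2) :=
  SimpleGraph.fromRel (fun u v =>
    (u.1 ≠ v.1 ∧ u.2 = v.2) ∨ (u.1 = v.1 ∧ u.2.1 ≠ v.2.1 ∧ u.2.2 = v.2.2) ∨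
    (u.1 = v.1 ∧ u.2.1 = v.2.1 ∧ u.2.2 ≠ v.2.2))

/-- `V_8`: the Wagner graph. -/
def V8 : SimpleGraph (ZMod 8) :=
  SimpleGraph.fromRel (fun u v => v = u + 1 ∨ v = u + 4)

/-- The dodecahedron, presented as the generalized Petersen graph `GP(10,2)`. -/
def dodecahedron : SimpleGraph (ZMod 10 × Fin 2) :=
  SimpleGraph.fromRel (fun u v =>
    (u.2 = 0 ∧ v.2 = 0 ∧ v.1 = u.1 + 1) ∨
    (u.2 = 1 ∧ v.2 = 1 ∧ v.1 = u.1 + 2) ∨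
    (u.2 = 0 ∧ v.2 = 1 ∧ u.1 = v.1))

/-- The families `F^g_{i,j,k}`: 2-connected subcubic graphs obtained from the disjoint
union of `k` copies of `L` (when `g = 4`) or of `R` (when `g = 5`) and one member of
`F_{i,j}` by adding `k+1` edges; when `k ≥ 1`, each added edge joins two different
constituent copies. -/
def MemFG (g i j k : ℕ) {W : Type} (G : SimpleGraph W) : Prop :=
  TwoConnected G ∧ Subcubic G ∧
  ∃ (P : W → Fin (k + 1)) (H : SimpleGraph W),
    H ≤ G ∧ (∀ u v, H.Adj u v → P u = P v) ∧
    MemF i j (H.induce (P ⁻¹' {0})) ∧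
    ((g = 4 ∧ ∀ l : Fin (k + 1), l ≠ 0 → Nonempty ((H.induce (P ⁻¹' {l})) ≃g Lgraph)) ∨
     (g = 5 ∧ ∀ l : Fin (k + 1), l ≠ 0 → Nonempty ((H.induce (P ⁻¹' {l})) ≃g Rgraph))) ∧
    (G.edgeSet \ H.edgeSet).ncard = k + 1 ∧
    (1 ≤ k → ∀ u v, G.Adj u v → ¬ H.Adj u v → P u ≠ P v)

/-- `t_4 = 2/9`, `t_5 = 1/5`. -/
noncomputable def tg (g : ℕ) : ℝ := if g = 4 then 2 / 9 else 1 / 5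

/-- The error function `ε_g` on graphs. -/
noncomputable def eps (g : ℕ) {V : Type} (G : SimpleGraph V) : ℝ := by
  classical
  exact
    if h1 : ∃ p : ℕ × ℕ, 1 ≤ p.1 ∧ p.2 ≤ p.1 ∧ MemF p.1 p.2 G then
      max (1 - (h1.choose.2 : ℝ) * (5 * tg g - 1) - (h1.choose.1 : ℝ) * tg g) 0
    else if h2 : ∃ q : ℕ × ℕ × ℕ, 1 ≤ q.1 ∧ q.2.1 ≤ q.1 ∧ MemFG g q.1 q.2.1 q.2.2 G then
      max (1 - tg g - (h2.choose.2.1 : ℝ) * (5 * tg g - 1) - (h2.choose.1 : ℝ) * tg g) 0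
    else if Nonempty (G ≃g (⊤ : SimpleGraph (Fin 2))) then -tg g
    else 0

/-- The error function `r_g(G)`: the sum of `ε_g(B)` over all blocks `B` of `G`. -/
noncomputable def rg (g : ℕ) {V : Type} (G : SimpleGraph V) : ℝ :=
  ∑ᶠ B ∈ {B : Set V | IsBlock G B}, eps g (G.induce B)

/-- `G` has two vertex-disjoint cycles, each of length less than `g`. -/
def TwoDisjointCyclesLt {V : Type} (G : SimpleGraph V) (g : ℕ) : Prop :=
  ∃ (u v : V) (c1 : G.Walk u u) (c2 : G.Walk v v), c1.IsCycle ∧ c2.IsCycle ∧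
    c1.length < g ∧ c2.length < g ∧ ∀ x, x ∈ c1.support → x ∉ c2.support

/-- `G` contains a (not necessarily induced) subgraph isomorphic to `K`. -/
def ContainsSubgraphCopy {U V : Type} (K : SimpleGraph U) (G : SimpleGraph V) : Prop :=
  ∃ f : U → V, Function.Injective f ∧ ∀ u v, K.Adj u v → G.Adj (f u) (f v)

/-- `G` is obtained from `H` by adding edges, each of which is a cut-edge of `G`. -/
def AddCutEdges {V : Type} (H G : SimpleGraph V) : Prop :=
  H ≤ G ∧ ∀ e ∈ G.edgeSet \ H.edgeSet, G.IsBridge e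

/-- The edges of `H` all lie inside the parts of the partition given by `P`. -/
def PartitionedBy {V ι : Type} (H : SimpleGraph V) (P : V → ι) : Prop :=
  ∀ u v, H.Adj u v → P u = P v

/-- `G` is `g`-minimal: a minimum counterexample to the main theorem. -/
def GMinimal (g : ℕ) {V : Type} [Fintype V] (G : SimpleGraph V) : Prop :=
  Subcubic G ∧ ¬ TwoDisjointCyclesLt G g ∧
  tg g * G.edgeSet.ncard + rg g G < (fvs G : ℝ) ∧
  ∀ (W : Type) [Fintype W] (H : SimpleGraph W), Nat.card W < Nat.card V →
    Subcubic H → ¬ TwoDisjointCyclesLt H g →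
    (fvs H : ℝ) ≤ tg g * H.edgeSet.ncard + rg g H

end InducedForest

namespace SimpleGraph

variable {V W : Type*} {G : SimpleGraph V} {G' : SimpleGraph W}

theorem Reachable.map_of_adj (f : V → W) (hf : ∀ ⦃u v⦄, G.Adj u v → G'.Reachable (f u) (f v))
    {u v : V} (h : G.Reachable u v) : G'.Reachable (f u) (f v) := by
  obtain ⟨p⟩ := h
  induction p with
  | nil => rfl
  | cons hadj _ ih => exact (hf hadj).trans ih

theorem IsAcyclic.map (f : V ↪ W) (h : G.IsAcyclic) : (G.map f).IsAcyclic := by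
  rw [isAcyclic_iff_forall_adj_isBridge] at h ⊢
  rintro _ _ ⟨-, a, b, hab, rfl, rfl⟩
  have : Nonempty V := ⟨a⟩
  have hinv : Function.LeftInverse (Function.invFun f) f := Function.leftInverse_invFun f.injective
  have hlift : ∀ ⦃c d⦄, ((G.map f).deleteEdges {s(f a, f b)}).Adj c d →
      (G.deleteEdges {s(a, b)}).Reachable (Function.invFun f c) (Function.invFun f d) := by
    rintro _ _ ⟨⟨-, c, d, hcd, rfl, rfl⟩, hne⟩
    refine Adj.reachable ?_
    rw [hinv c, hinv d, deleteEdges_adj]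
    refine ⟨hcd, fun he => hne ?_⟩
    simp_all [hcd.ne]
  rw [isBridge_iff]
  intro hr
  have := hr.map_of_adj _ hlift
  rw [hinv a, hinv b] at this
  exact isBridge_iff.mp (h hab) this

end SimpleGraph

namespace InducedForest

section

variable {V : Type} {F : SimpleGraph V} {x y u v : V}

theorem exists_isFVS_ncard_eq_fvs (G : SimpleGraph V) : ∃ S, IsFVS G S ∧ S.ncard = fvs G :=
  Nat.sInf_mem (s := {n | ∃ S : Set V, IsFVS G S ∧ S.ncard = n})
    ⟨_, Set.univ, fun v => absurd v.2 (by simp), rfl⟩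

theorem fvs_le_ncard {G : SimpleGraph V} {S : Set V} (hS : IsFVS G S) : fvs G ≤ S.ncard :=
  Nat.sInf_le ⟨S, hS, rfl⟩

theorem fvs_mono {G G' : SimpleGraph V} (h : G ≤ G') : fvs G ≤ fvs G' := by
  obtain ⟨S, hS, hcard⟩ := exists_isFVS_ncard_eq_fvs G'
  exact hcard ▸ fvs_le_ncard (hS.anti fun _ _ hab => h hab)

@[simp]
theorem subdivide_adj_some_some :
    (subdivide F x y).Adj (some u) (some v) ↔ F.Adj u v ∧ s(u, v) ≠ s(x, y) := by
  simp only [subdivide, fromRel_adj, ne_eq, Option.some.injEq]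
  constructor
  · rintro ⟨-, h | h⟩
    · exact h
    · exact ⟨h.1.symm, by rw [Sym2.eq_swap]; exact h.2⟩
  · rintro h
    exact ⟨h.1.ne, .inl h⟩

@[simp]
theorem subdivide_adj_some_none : (subdivide F x y).Adj (some u) none ↔ u = x ∨ u = y := by
  simp [subdivide]

@[simp]
theorem subdivide_adj_none_some : (subdivide F x y).Adj none (some u) ↔ u = x ∨ u = y := by
  rw [adj_comm, subdivide_adj_some_none]

theorem subdivide_comm : subdivide F x y = subdivide F y x := by
  ext (_ | a) (_ | b) <;> simp [Sym2.eq_swap, or_comm]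

theorem subdivide_eq_sup_edge :
    subdivide F x y = (F.deleteEdges {s(x, y)}).map Function.Embedding.some ⊔
      edge (some x) none ⊔ edge (some y) none := by
  ext (_ | a) (_ | b) <;> simp [map_adj', edge_adj, eq_comm]
  exact fun h _ _ => h.ne

theorem isAcyclic_subdivide_of_sup_edge (h : (F ⊔ edge x y).IsAcyclic) :
    (subdivide F x y).IsAcyclic := by
  set D := F.deleteEdges {s(x, y)}
  have hD : D.IsAcyclic := h.anti ((F.deleteEdges_le _).trans le_sup_left)
  have hDxy : D.Reachable x y → x = y := fun hr => by
    have hle : D ⊔ edge x y ≤ F ⊔ edge x y := sup_le_sup_right (F.deleteEdges_le _) _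
    simpa [D] using (isAcyclic_sup_fromEdgeSet_iff.mp (h.anti hle)).2 hr
  have hpendant : (D.map Function.Embedding.some ⊔ edge (some x) none).IsAcyclic := by
    refine (hD.map _).sup_edge_of_not_reachable
      (not_reachable_of_neighborSet_right_eq_empty (Option.some_ne_none x) ?_)
    ext (_ | a) <;> simp [map_adj']
  rw [subdivide_eq_sup_edge]
  rcases eq_or_ne x y with rfl | hne
  · rwa [sup_assoc, sup_idem]
  -- Collapsing `none` onto `x` turns a path from `some y` to `none` into one from `y` to `x` in `D`.
  refine hpendant.sup_edge_of_not_reachable fun hr => hne (hDxy ?_)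
  refine (hr.map_of_adj (G' := D) (fun o => o.getD x) ?_).symm
  intro a b hab
  rw [sup_adj, edge_adj] at hab
  rcases hab with ⟨-, a, b, hab, rfl, rfl⟩ | ⟨⟨rfl, rfl⟩ | ⟨rfl, rfl⟩, -⟩
  exacts [hab.reachable, .rfl, .rfl]

theorem IsFVS.subdivide {S : Set V} (hS : IsFVS F S) (hxy : F.Adj x y ∨ x = y) :
    IsFVS (subdivide F x y) (some '' S) := by
  set F' := (F.induce Sᶜ).spanningCoe
  have hF'_adj : ∀ {a b}, F'.Adj a b ↔ F.Adj a b ∧ a ∉ S ∧ b ∉ S := by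
    intro a b
    simp only [F', map_adj', induce_adj]
    exact ⟨fun ⟨_, a', b', h, ha, hb⟩ => ha ▸ hb ▸ ⟨h, a'.2, b'.2⟩,
      fun ⟨h, ha, hb⟩ => ⟨h.ne, ⟨a, ha⟩, ⟨b, hb⟩, h, rfl, rfl⟩⟩
  have hF' : (F' ⊔ edge x y).IsAcyclic := by
    refine isAcyclic_sup_fromEdgeSet_iff.mpr ⟨IsAcyclic.map _ hS, fun hr => ?_⟩
    rcases eq_or_ne x y with hxy' | hne
    · exact .inl hxy'
    have hx : x ∉ S := fun hx =>
      not_reachable_of_neighborSet_left_eq_empty hne (by ext; simp [hF'_adj, hx]) hr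
    have hy : y ∉ S := fun hy =>
      not_reachable_of_neighborSet_right_eq_empty hne (by ext; simp [hF'_adj, hy]) hr
    exact .inr (hF'_adj.mpr ⟨hxy.resolve_right hne, hx, hy⟩)
  refine ((isAcyclic_subdivide_of_sup_edge hF').induce _).anti ?_
  rintro ⟨_ | a, ha⟩ ⟨_ | b, hb⟩ hab
  case some.some =>
    simp only [Set.mem_compl_iff, Set.mem_image, Option.some.injEq, exists_eq_right] at ha hb
    rw [induce_adj, subdivide_adj_some_some] at hab ⊢
    exact ⟨hF'_adj.mpr ⟨hab.1, ha, hb⟩, hab.2⟩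
  -- The edges at `none` do not depend on the subdivided graph.
  all_goals exact hab

theorem fvs_subdivide_le (hxy : F.Adj x y ∨ x = y) : fvs (subdivide F x y) ≤ fvs F := by
  obtain ⟨S, hS, hcard⟩ := exists_isFVS_ncard_eq_fvs F
  calc fvs (subdivide F x y) ≤ (some '' S).ncard := fvs_le_ncard (hS.subdivide hxy)
    _ = fvs F := by rw [Set.ncard_image_of_injective _ (Option.some_injective V), hcard]

theorem subdivide_deleteEdges_some_some :
    (subdivide F x y).deleteEdges {s(some u, some v)} =
      subdivide (F.deleteEdges {s(u, v)}) x y := by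
  ext (_ | a) (_ | b) <;> simp
  grind

theorem subdivide_deleteEdges_some_none (hxy : x ≠ y) :
    (subdivide F x y).deleteEdges {s(some x, none)} =
      subdivide (F.deleteEdges {s(x, y)}) y y := by
  ext (_ | a) (_ | b) <;> simp <;> grind [Adj.ne]

theorem exists_fvs_subdivide_deleteEdges_le (hxy : F.Adj x y) {e : Sym2 (Option V)}
    (he : e ∈ (subdivide F x y).edgeSet) :
    ∃ f ∈ F.edgeSet, fvs ((subdivide F x y).deleteEdges {e}) ≤ fvs (F.deleteEdges {f}) := by
  have hpendant : ∀ {u}, (subdivide F x y).Adj (some u) none →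
      fvs ((subdivide F x y).deleteEdges {s(some u, none)}) ≤ fvs (F.deleteEdges {s(x, y)}) := by
    intro u hu
    rcases subdivide_adj_some_none.mp hu with rfl | rfl
    · rw [subdivide_deleteEdges_some_none hxy.ne]
      exact fvs_subdivide_le (.inr rfl)
    · rw [subdivide_comm, subdivide_deleteEdges_some_none hxy.ne.symm, Sym2.eq_swap]
      exact fvs_subdivide_le (.inr rfl)
  induction e using Sym2.ind with | _ a b => ?_
  rcases a with _ | u <;> rcases b with _ | v
  · exact absurd he (by simp)
  · rw [Sym2.eq_swap]
    exact ⟨s(x, y), hxy, hpendant he.symm⟩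
  · exact ⟨s(x, y), hxy, hpendant he⟩
  · obtain ⟨huv, hne⟩ := subdivide_adj_some_some.mp he
    refine ⟨s(u, v), huv, ?_⟩
    rw [subdivide_deleteEdges_some_some]
    exact fvs_subdivide_le (.inl ((deleteEdges_adj ..).mpr ⟨hxy, Ne.symm hne⟩))

end

theorem statement6_general {V : Type} (H : SimpleGraph V) (x y : V)
    (hxy : H.Adj x y) (k : ℕ) (hk : k = 0 ∨ k = 1) (p : ℝ)
    (hH : ∀ W : Set (Sym2 V), W ⊆ H.edgeSet → W.ncard = k →
      (fvs (H.deleteEdges W) : ℝ) ≤ p) :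
    ∀ W' : Set (Sym2 (Option V)), W' ⊆ (subdivide H x y).edgeSet → W'.ncard = k →
      (fvs ((subdivide H x y).deleteEdges W') : ℝ) ≤ p := by
  intro W' hW' hcard
  rcases hk with rfl | rfl
  · calc (fvs ((subdivide H x y).deleteEdges W') : ℝ)
        ≤ fvs (H.deleteEdges ∅) := by
          rw [deleteEdges_empty]
          exact_mod_cast (fvs_mono (deleteEdges_le _)).trans (fvs_subdivide_le (.inl hxy))
      _ ≤ p := hH ∅ (Set.empty_subset _) (Set.ncard_empty _)
  · obtain ⟨e, rfl⟩ := Set.ncard_eq_one.mp hcard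
    obtain ⟨f, hf, hle⟩ := exists_fvs_subdivide_deleteEdges_le hxy (hW' rfl)
    exact (Nat.cast_le.mpr hle).trans
      (hH {f} (Set.singleton_subset_iff.mpr hf) (Set.ncard_singleton f))

/-- subdividing an edge preserves upper bounds on the feedback vertex
number under deletion of `k ∈ {0,1}` edges. -/
theorem statement6 {V : Type} [Fintype V] (H : SimpleGraph V) (x y : V)
    (hxy : H.Adj x y) (k : ℕ) (hk : k = 0 ∨ k = 1) (p : ℝ)
    (hH : ∀ W : Set (Sym2 V), W ⊆ H.edgeSet → W.ncard = k →
      (fvs (H.deleteEdges W) : ℝ) ≤ p) :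
    ∀ W' : Set (Sym2 (Option V)), W' ⊆ (subdivide H x y).edgeSet → W'.ncard = k →
      (fvs ((subdivide H x y).deleteEdges W') : ℝ) ≤ p :=
  statement6_general H x y hxy k hk p hH

end InducedForest
end

section
/- Let g ∈ {4,5}. If G ∈ F_{i,j} for some integers i ≥ 1 and 0 ≤ j ≤ i, then for every edge e of G, φ(G − e) ≤ t_g·|E(G)| + ε_g(G) − 1, where G − e denotes deletion of the edge e. -/
open SimpleGraph

namespace InducedForest

/-!
Every member of `F_{i,j}` has `i + 5j` edges, and deleting any edge leaves a graph with a
feedback vertex set of at most `j` vertices; as `t (i + 5j) + (1 - j (5t - 1) - i t) - 1 = j`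
for every `t`, this is the bound. Both facts follow the recursive construction of `F_{i,j}`,
viewing a subdivision of `xy` as deleting `xy` and adding a new vertex joined to `x` and `y`,
and `∘` as subdividing twice and adding a new vertex joined to three vertices. A subdivision
keeps the feedback vertex sets: in what is left, the subdivision vertex either has at most one
neighbour, or it joins the two ends of an edge that was a bridge of a forest. For the new vertex
`r` of `∘`, an edge not at `r` is handled by adding `r` to the set; for an edge at `r`, one of
the other two neighbours of `r` goes into the set, which leaves `r` a leaf. The base cases are
`C_i`, which minus an edge is a path, and `K_4`, the cone over `C_3`.
-/

section Acyclic

variable {V W : Type*} {G : SimpleGraph V} {H : SimpleGraph W}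

theorem _root_.SimpleGraph.isAcyclic_of_isAcyclic_induce_support
    (h : (G.induce G.support).IsAcyclic) : G.IsAcyclic := fun _ c hc =>
  h _ <| Walk.IsCycle.of_map (f := (Embedding.induce G.support).toHom)
    (p := c.induce _ fun _ hx => mem_support_of_mem_walk_support c hc.not_nil hx) <| by
      rwa [Walk.map_induce]

theorem _root_.SimpleGraph.IsAcyclic.of_hom_injOn_support (f : G →g H)
    (hf : Set.InjOn f G.support) (h : H.IsAcyclic) : G.IsAcyclic :=
  isAcyclic_of_isAcyclic_induce_support <|
    h.comap (f.comp (Embedding.induce G.support).toHom) fun a b hab => Subtype.ext (hf a.2 b.2 hab)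

theorem _root_.SimpleGraph.Reachable.map_of_forall_adj {f : V → W}
    (hf : ∀ a b, G.Adj a b → f a = f b ∨ H.Adj (f a) (f b)) {u v : V} (h : G.Reachable u v) :
    H.Reachable (f u) (f v) := by
  rw [reachable_iff_reflTransGen] at h ⊢
  refine Relation.ReflTransGen.lift' f (fun a b hab => ?_) u v h
  simp only [Function.onFun]
  rcases hf a b hab with heq | hadj
  · exact heq ▸ Relation.ReflTransGen.refl
  · exact .single hadj

theorem _root_.SimpleGraph.isAcyclic_hasse_nat : (hasse ℕ).IsAcyclic := by
  have stays_below : ∀ k a b,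
      ((hasse ℕ).deleteEdges {s(k, k + 1)}).Reachable a b → a ≤ k → b ≤ k := by
    intro k a b ⟨p⟩
    induction p with
    | nil => exact id
    | cons hadj _ ih =>
      intro ha
      simp only [deleteEdges_adj, hasse_adj, Nat.covBy_iff_add_one_eq,
        Set.mem_singleton_iff] at hadj
      apply ih
      grind
  refine isAcyclic_iff_forall_adj_isBridge.2 fun a b hab => isBridge_iff.2 fun hreach => ?_
  rw [hasse_adj, Nat.covBy_iff_add_one_eq, Nat.covBy_iff_add_one_eq] at hab
  rcases hab with rfl | rfl
  · exact absurd (stays_below a _ _ hreach le_rfl) (by omega)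
  · rw [Sym2.eq_swap] at hreach
    exact absurd (stays_below b _ _ hreach.symm le_rfl) (by omega)

end Acyclic

section Constructions

variable {V : Type}

/-- The graph `G - S`, with the vertices of `S` kept as isolated vertices. -/
def isolate (G : SimpleGraph V) (S : Set V) : SimpleGraph V where
  Adj u v := G.Adj u v ∧ u ∉ S ∧ v ∉ S
  symm := ⟨fun _ _ h => ⟨h.1.symm, h.2.2, h.2.1⟩⟩
  loopless := ⟨fun _ h => h.1.ne rfl⟩

@[simp] theorem isolate_adj {G : SimpleGraph V} {S : Set V} {u v : V} :
    (isolate G S).Adj u v ↔ G.Adj u v ∧ u ∉ S ∧ v ∉ S := Iff.rfl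

theorem fvs_le_ncard_of_isAcyclic_isolate {G : SimpleGraph V} {S : Set V}
    (h : (isolate G S).IsAcyclic) : fvs G ≤ S.ncard :=
  let incl : G.induce Sᶜ →g isolate G S :=
    ⟨Subtype.val, fun {u v} huv => ⟨huv, u.2, v.2⟩⟩
  Nat.sInf_le ⟨S, h.comap incl Subtype.val_injective, rfl⟩

variable {K K' : SimpleGraph V} {T T' : Set V}

@[simp] theorem addApex_adj_some_some {u v : V} :
    (addApex K T).Adj (some u) (some v) ↔ K.Adj u v := by
  simp only [addApex, fromRel_adj, ne_eq, Option.some.injEq]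
  exact ⟨fun h => h.2.elim id fun h => h.symm, fun h => ⟨h.ne, .inl h⟩⟩

@[simp] theorem addApex_adj_some_none {u : V} : (addApex K T).Adj (some u) none ↔ u ∈ T := by
  simp [addApex]

@[simp] theorem addApex_adj_none_some {u : V} : (addApex K T).Adj none (some u) ↔ u ∈ T := by
  simp [addApex]

@[simp] theorem addApex_adj_none_none : ¬ (addApex K T).Adj none none := by
  simp [addApex]

theorem addApex_mono (hK : K ≤ K') (hT : T ⊆ T') : addApex K T ≤ addApex K' T' := by
  intro u v
  cases u <;> cases v <;> simp only [addApex_adj_some_some, addApex_adj_some_none,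
    addApex_adj_none_some, addApex_adj_none_none, imp_false, not_false_eq_true]
  exacts [fun h => hT h, fun h => hT h, fun h => hK h]

theorem addApex_insert (p : V) : addApex K (insert p T) = addApex K T ⊔ edge none (some p) := by
  ext u v
  cases u <;> cases v <;> simp [edge_adj, or_comm, eq_comm]

theorem subdivide_eq_addApex (x y : V) :
    subdivide K x y = addApex (K.deleteEdges {s(x, y)}) {x, y} := by
  ext u v
  cases u <;> cases v <;> simp [subdivide, addApex]

theorem edgeSet_addApex :
    (addApex K T).edgeSet = Sym2.map some '' K.edgeSet ∪ (fun t => s(some t, none)) '' T := by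
  ext e
  induction e using Sym2.ind with
  | _ u v =>
    cases u <;> cases v <;> simp [Sym2.exists, Sym2.map_mk, eq_comm]
    exact ⟨fun h => ⟨_, _, h, .inl ⟨rfl, rfl⟩⟩,
      by rintro ⟨x, y, h, ⟨rfl, rfl⟩ | ⟨rfl, rfl⟩⟩; exacts [h, h.symm]⟩

theorem ncard_edgeSet_addApex [Finite V] :
    (addApex K T).edgeSet.ncard = K.edgeSet.ncard + T.ncard := by
  rw [edgeSet_addApex, Set.ncard_union_eq, Set.ncard_image_of_injective _
      (Sym2.map.injective (Option.some_injective V)),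
    Set.ncard_image_of_injective _ fun u v h => by simpa using h]
  rw [Set.disjoint_left]
  rintro _ ⟨f, -, rfl⟩ ⟨t, -, h⟩
  induction f using Sym2.ind
  simp [Sym2.map_mk] at h

theorem ncard_edgeSet_subdivide [Finite V] {x y : V} (hxy : K.Adj x y) :
    (subdivide K x y).edgeSet.ncard = K.edgeSet.ncard + 1 := by
  rw [subdivide_eq_addApex, ncard_edgeSet_addApex, edgeSet_deleteEdges,
    Set.ncard_pair hxy.ne,
    ← Set.ncard_sdiff_singleton_add_one (show s(x, y) ∈ K.edgeSet from hxy)]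

theorem addApex_deleteEdges_map_some (f : Sym2 V) :
    (addApex K T).deleteEdges {Sym2.map some f} = addApex (K.deleteEdges {f}) T := by
  ext u v
  induction f using Sym2.ind
  cases u <;> cases v <;> simp [Sym2.map_mk]

theorem addApex_deleteEdges_apex (t : V) :
    (addApex K T).deleteEdges {s(some t, none)} = addApex K (T \ {t}) := by
  ext u v
  cases u <;> cases v <;> simp [and_comm, eq_comm]

theorem isolate_addApex_image_some (S : Set V) :
    isolate (addApex K T) (some '' S) = addApex (isolate K S) (T \ S) := by
  ext u v
  cases u <;> cases v <;> simp

theorem isolate_addApex_insert_none_image_some (S : Set V) :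
    isolate (addApex K T) (insert none (some '' S)) = addApex (isolate K S) ∅ := by
  ext u v
  cases u <;> cases v <;> simp

end Constructions

section ApexAcyclic

variable {V : Type} {K : SimpleGraph V} {T : Set V}

theorem isAcyclic_addApex_empty (hK : K.IsAcyclic) : (addApex K ∅).IsAcyclic := by
  cases isEmpty_or_nonempty V
  · exact IsAcyclic.of_subsingleton
  · refine IsAcyclic.of_hom_injOn_support
      ⟨fun o => o.getD (Classical.arbitrary V), fun {u v} h => ?_⟩ ?_ hK
    · cases u <;> cases v <;> simp_all
    · rintro (_ | u) ⟨_ | _, hu⟩ (_ | v) ⟨_ | _, hv⟩ h <;> simp_all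

theorem isAcyclic_addApex_singleton (hK : K.IsAcyclic) (p : V) :
    (addApex K {p}).IsAcyclic := by
  rw [Set.singleton_def, addApex_insert]
  exact (isAcyclic_addApex_empty hK).sup_edge_of_not_reachable fun h => by
    simpa [mem_support, Option.exists] using mem_support_of_reachable (by simp) h

theorem isAcyclic_addApex_of_subset_pair (hK : K.IsAcyclic) {p q : V} (hT : T ⊆ {p, q})
    (hpq : p ∈ T → q ∈ T → ¬ K.Reachable p q) : (addApex K T).IsAcyclic := by
  by_cases hp : p ∈ T
  · by_cases hq : q ∈ T
    · refine IsAcyclic.anti (addApex_mono le_rfl hT) ?_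
      rw [addApex_insert]
      refine (isAcyclic_addApex_singleton hK q).sup_edge_of_not_reachable fun h => hpq hp hq ?_
      -- contracting the edge from the apex to `q` turns a path from the apex to `p` into one in `K`
      refine (h.map_of_forall_adj (H := K) (f := fun o => o.getD q) ?_).symm
      rintro (_ | u) (_ | v) h <;> simp_all
    · exact (isAcyclic_addApex_singleton hK p).anti <| addApex_mono le_rfl fun t ht => by
        rcases hT ht with rfl | rfl <;> trivial
  · exact (isAcyclic_addApex_singleton hK q).anti <| addApex_mono le_rfl fun t ht => by
      rcases hT ht with rfl | rfl <;> trivial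

end ApexAcyclic

section FeedbackVertexSets

variable {V W : Type}

/-- Meaningful for finite `V` only: `Set.ncard` of an infinite set is `0`. -/
def FVSCardLE (G : SimpleGraph V) (n : ℕ) : Prop :=
  ∃ S : Set V, S.ncard ≤ n ∧ (isolate G S).IsAcyclic

theorem FVSCardLE.fvs_le {G : SimpleGraph V} {n : ℕ} (h : FVSCardLE G n) : fvs G ≤ n :=
  let ⟨_, hS, hacyc⟩ := h
  (fvs_le_ncard_of_isAcyclic_isolate hacyc).trans hS

def DeleteEdgeFVSCardLE (G : SimpleGraph V) (n : ℕ) : Prop :=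
  ∀ e ∈ G.edgeSet, FVSCardLE (G.deleteEdges {e}) n

theorem DeleteEdgeFVSCardLE.of_iso {G : SimpleGraph V} {G' : SimpleGraph W} (φ : G ≃g G')
    {n : ℕ} (h : DeleteEdgeFVSCardLE G' n) : DeleteEdgeFVSCardLE G n := by
  intro e he
  obtain ⟨S, hS, hacyc⟩ := h (Sym2.map φ e) (φ.map_mem_edgeSet_iff.2 he)
  refine ⟨φ ⁻¹' S, ?_, hacyc.comap ⟨φ, fun {u v} huv => ?_⟩ φ.injective⟩
  · rwa [Set.ncard_preimage_of_injective_subset_range φ.injective (by simp)]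
  · simp only [isolate_adj, deleteEdges_adj, Set.mem_singleton_iff, Set.mem_preimage] at huv ⊢
    refine ⟨⟨φ.map_adj_iff.2 huv.1.1, fun h => huv.1.2 ?_⟩, huv.2⟩
    exact Sym2.map.injective φ.injective (by rwa [Sym2.map_mk])

end FeedbackVertexSets

section Steps

variable {V : Type} {K : SimpleGraph V} {n : ℕ}

theorem DeleteEdgeFVSCardLE.subdivide {x y : V} (hxy : K.Adj x y) (h : DeleteEdgeFVSCardLE K n) :
    DeleteEdgeFVSCardLE (subdivide K x y) n := by
  have ncard_image_some_le {S : Set V} (hS : S.ncard ≤ n) : (some '' S).ncard ≤ n :=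
    (Set.ncard_image_of_injective S (Option.some_injective V)).trans_le hS
  rw [subdivide_eq_addApex]
  intro e he
  rw [edgeSet_addApex] at he
  rcases he with ⟨f, hf, rfl⟩ | ⟨t, ht, rfl⟩
  · rw [edgeSet_deleteEdges] at hf
    obtain ⟨S, hS, hacyc⟩ := h f hf.1
    refine ⟨some '' S, ncard_image_some_le hS, ?_⟩
    rw [addApex_deleteEdges_map_some, isolate_addApex_image_some]
    set B := isolate (K.deleteEdges {f}) S
    have hle :
        isolate ((K.deleteEdges {s(x, y)}).deleteEdges {f}) S ≤ B.deleteEdges {s(x, y)} := by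
      intro u v
      simp only [isolate_adj, deleteEdges_adj, B]
      tauto
    -- if `x` and `y` survive in `B`, then `xy` is an edge of the forest `B`, hence a bridge
    refine (isAcyclic_addApex_of_subset_pair (hacyc.anti (deleteEdges_le _)) Set.sdiff_subset
      fun hx hy => isBridge_iff.1 <| isAcyclic_iff_forall_adj_isBridge.1 hacyc ?_).anti
      (addApex_mono hle le_rfl)
    exact ⟨(deleteEdges_adj ..).2 ⟨hxy, Ne.symm hf.2⟩, hx.2, hy.2⟩
  · obtain ⟨S, hS, hacyc⟩ := h s(x, y) hxy
    refine ⟨some '' S, ncard_image_some_le hS, ?_⟩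
    rw [addApex_deleteEdges_apex, isolate_addApex_image_some]
    refine isAcyclic_addApex_of_subset_pair hacyc
      (Set.sdiff_subset.trans Set.sdiff_subset) fun hx hy => ?_
    rcases ht with rfl | rfl
    exacts [absurd hx.1.2 (by simp), absurd hy.1.2 (by simp)]

theorem fvsCardLE_addApex_deleteEdges_apex (h : DeleteEdgeFVSCardLE K n) {T : Set V} {t r k : V}
    (hr : r ∈ K.support) (hT : T ⊆ {t, r, k}) :
    FVSCardLE ((addApex K T).deleteEdges {s(some t, none)}) (n + 1) := by
  obtain ⟨w, hrw⟩ := hr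
  obtain ⟨S, hS, hacyc⟩ := h s(r, w) hrw
  refine ⟨some '' insert r S, ?_, ?_⟩
  · rw [Set.ncard_image_of_injective _ (Option.some_injective V)]
    exact (Set.ncard_insert_le r S).trans (by omega)
  rw [addApex_deleteEdges_apex, isolate_addApex_image_some]
  refine (isAcyclic_addApex_singleton hacyc k).anti (addApex_mono (fun u v huv => ?_) ?_)
  · simp only [isolate_adj, deleteEdges_adj, Set.mem_insert_iff, not_or] at huv ⊢
    refine ⟨⟨huv.1, fun h => ?_⟩, huv.2.1.2, huv.2.2.2⟩
    rcases Sym2.eq_iff.1 h with ⟨rfl, -⟩ | ⟨-, rfl⟩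
    exacts [huv.2.1.1 rfl, huv.2.2.1 rfl]
  · intro u hu
    simp only [Set.mem_sdiff, Set.mem_singleton_iff, Set.mem_insert_iff, not_or] at hu
    rcases hT hu.1.1 with rfl | rfl | rfl
    exacts [absurd rfl hu.1.2, absurd rfl hu.2.1, rfl]

theorem DeleteEdgeFVSCardLE.addApex (h : DeleteEdgeFVSCardLE K n) {a b c : V}
    (hb : b ∈ K.support) (hc : c ∈ K.support) :
    DeleteEdgeFVSCardLE (addApex K {a, b, c}) (n + 1) := by
  intro e he
  rw [edgeSet_addApex] at he
  rcases he with ⟨f, hf, rfl⟩ | ⟨t, ht, rfl⟩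
  · obtain ⟨S, hS, hacyc⟩ := h f hf
    refine ⟨insert none (some '' S), ?_, ?_⟩
    · rw [← Set.ncard_image_of_injective S (Option.some_injective V)] at hS
      exact (Set.ncard_insert_le _ _).trans (by omega)
    rw [addApex_deleteEdges_map_some, isolate_addApex_insert_none_image_some]
    exact isAcyclic_addApex_empty hacyc
  · -- delete the apex neighbour `b` (or `c`, if `t = b`) together with a small set for `K`
    rcases ht with rfl | rfl | rfl
    · exact fvsCardLE_addApex_deleteEdges_apex h hb (k := c) (by simp)
    · exact fvsCardLE_addApex_deleteEdges_apex h hc (k := a) (by grind)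
    · exact fvsCardLE_addApex_deleteEdges_apex h hb (k := a) (by grind)

end Steps

section Cycle

variable {n : ℕ}

theorem cyc_adj {u v : ZMod n} : (cyc n).Adj u v ↔ u ≠ v ∧ (v = u + 1 ∨ u = v + 1) := by
  simp [cyc]

theorem _root_.ZMod.val_add_one_of_add_one_ne_zero [NeZero n] (hn : 1 < n) {x : ZMod n}
    (hx : x + 1 ≠ 0) : (x + 1).val = x.val + 1 := by
  have : Fact (1 < n) := ⟨hn⟩
  rw [ZMod.val_add, ZMod.val_one, Nat.mod_eq_of_lt]
  refine (Nat.succ_le_of_lt x.val_lt).lt_of_ne fun h => hx ?_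
  rw [← ZMod.natCast_zmod_val x, ← Nat.cast_succ, h, ZMod.natCast_self]

theorem edgeSet_cyc (hn : 3 ≤ n) : (cyc n).edgeSet = Set.range fun a : ZMod n => s(a, a + 1) := by
  have : Fact (1 < n) := ⟨by omega⟩
  ext e
  induction e using Sym2.ind with
  | _ u v =>
    simp only [mem_edgeSet, cyc_adj, Set.mem_range, Sym2.eq_iff]
    constructor
    · rintro ⟨-, rfl | rfl⟩
      exacts [⟨u, .inl ⟨rfl, rfl⟩⟩, ⟨v, .inr ⟨rfl, rfl⟩⟩]
    · rintro ⟨a, ⟨rfl, rfl⟩ | ⟨rfl, rfl⟩⟩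
      exacts [⟨by simp, .inl rfl⟩, ⟨by simp, .inr rfl⟩]

theorem ncard_edgeSet_cyc (hn : 3 ≤ n) : (cyc n).edgeSet.ncard = n := by
  have : NeZero n := ⟨by omega⟩
  have two_ne_zero' : (2 : ZMod n) ≠ 0 := by
    intro h
    have := (ZMod.natCast_eq_zero_iff 2 n).1 (by exact_mod_cast h)
    have := Nat.le_of_dvd two_pos this
    omega
  rw [edgeSet_cyc hn, Set.ncard_range_of_injective, Nat.card_zmod]
  intro a b h
  rcases Sym2.eq_iff.1 h with ⟨h, -⟩ | ⟨h1, h2⟩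
  · exact h
  · exact absurd (by linear_combination h2 - h1) two_ne_zero'

theorem deleteEdgeFVSCardLE_cyc (hn : 3 ≤ n) : DeleteEdgeFVSCardLE (cyc n) 0 := by
  have : NeZero n := ⟨by omega⟩
  intro e he
  rw [edgeSet_cyc hn] at he
  obtain ⟨a, rfl⟩ := he
  refine ⟨∅, by simp, ?_⟩
  -- cut open at the deleted edge `a, a + 1`, the cycle is the path `a + 1, a + 2, …, a`
  have step : ∀ u, u ≠ a → (u + 1 - (a + 1)).val = (u - (a + 1)).val + 1 := fun u hu => by
    have shift : u + 1 - (a + 1) = u - (a + 1) + 1 := by ring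
    rw [shift, ZMod.val_add_one_of_add_one_ne_zero (by omega)]
    rwa [← shift, add_sub_add_right_eq_sub, sub_ne_zero]
  refine isAcyclic_hasse_nat.comap ⟨fun u => (u - (a + 1)).val, fun {u v} huv => ?_⟩
    fun u v h => sub_left_inj.1 (ZMod.val_injective n h)
  simp only [isolate_adj, deleteEdges_adj, cyc_adj, Set.mem_singleton_iff,
    Set.mem_empty_iff_false, not_false_eq_true, and_true] at huv
  simp only [hasse_adj, Nat.covBy_iff_add_one_eq]
  rcases huv with ⟨⟨-, rfl | rfl⟩, hne⟩
  · exact .inl (step u fun h => hne (h ▸ rfl)).symm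
  · exact .inr (step v fun h => hne (h ▸ Sym2.eq_swap)).symm

end Cycle

section Families

variable {V W : Type}

theorem _root_.SimpleGraph.Iso.ncard_edgeSet_eq {G : SimpleGraph V} {G' : SimpleGraph W}
    (φ : G ≃g G') : G.edgeSet.ncard = G'.edgeSet.ncard :=
  Nat.card_congr φ.mapEdgeSet

theorem none_mem_support_subdivide (K : SimpleGraph V) (x y : V) :
    none ∈ (subdivide K x y).support :=
  ⟨some x, by simp [subdivide_eq_addApex]⟩

theorem some_mem_support_subdivide {K : SimpleGraph V} {v : V} (hv : v ∈ K.support) (x y : V) :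
    some v ∈ (subdivide K x y).support := by
  obtain ⟨w, hvw⟩ := (mem_support K).1 hv
  by_cases h : s(v, w) = s(x, y)
  · exact ⟨none, by simp [subdivide_eq_addApex, (Sym2.mem_iff.1 (h ▸ Sym2.mem_mk_left v w))]⟩
  · exact ⟨some w, by simp [subdivide_eq_addApex, hvw, h]⟩

theorem IsCircOp.exists_iso {H : SimpleGraph V} {e1 e2 : Sym2 V} {a : V} {G : SimpleGraph W}
    (hG : IsCircOp H e1 e2 a G) (he1 : e1 ∈ H.edgeSet) (he2 : e2 ∈ H.edgeSet) :
    ∃ x y u v, H.Adj x y ∧ (subdivide H x y).Adj u v ∧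
      Nonempty (G ≃g
        addApex (subdivide (subdivide H x y) u v) {some (some a), some none, none}) := by
  rcases hG with ⟨hne, x1, y1, x2, y2, rfl, rfl, φ⟩ | ⟨-, x, y, rfl, φ⟩
  · refine ⟨x1, y1, some x2, some y2, he1, ?_, φ⟩
    rw [subdivide_eq_addApex, addApex_adj_some_some, deleteEdges_adj]
    exact ⟨he2, fun h => hne (Set.mem_singleton_iff.1 h).symm⟩
  · exact ⟨x, y, none, some y, he1, by simp [subdivide_eq_addApex], φ⟩

theorem ncard_circOp_apex_neighbors (a : V) :
    ({some (some a), some none, none} : Set (Option (Option V))).ncard = 3 :=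
  Set.ncard_eq_three.2 ⟨_, _, _, by simp, by simp, by simp, rfl⟩

def topFinFourIsoAddApexCyc : (⊤ : SimpleGraph (Fin 4)) ≃g addApex (cyc 3) {0, 1, 2} :=
  have h : addApex (cyc 3) {0, 1, 2} = ⊤ := by
    ext u v
    rcases u with _ | u <;> rcases v with _ | v <;> simp [cyc_adj]
    · revert v; decide
    · revert u; decide
    · revert u v; decide
  h ▸ Iso.completeGraph (finSuccEquiv 3)

end Families

section MemF

variable {i j : ℕ} {V : Type} {G : SimpleGraph V}

theorem MemF.finite (h : MemF i j G) : Finite V := by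
  induction h with
  | @cycle n hn _ _ h =>
    have : NeZero n := ⟨by omega⟩
    exact .of_equiv _ h.some.toEquiv.symm
  | k4 h => exact .of_equiv _ h.some.toEquiv.symm
  | circ _ _ _ he1 he2 hG =>
    obtain ⟨_, _, _, _, _, _, ⟨φ⟩⟩ := hG.exists_iso he1 he2
    exact .of_equiv _ φ.toEquiv.symm
  | subd _ _ _ hG => exact .of_equiv _ hG.some.toEquiv.symm

theorem MemF.ncard_edgeSet (h : MemF i j G) : G.edgeSet.ncard = i + 5 * j := by
  induction h with
  | cycle hi h => rw [h.some.ncard_edgeSet_eq, ncard_edgeSet_cyc hi, mul_zero, add_zero]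
  | k4 h =>
    rw [h.some.ncard_edgeSet_eq, Set.ncard_eq_toFinset_card']
    decide
  | circ _ hH hxy he1 he2 hG ih =>
    have := hH.finite
    obtain ⟨_, _, _, _, h1, h2, ⟨φ⟩⟩ := hG.exists_iso he1 he2
    rw [φ.ncard_edgeSet_eq, ncard_edgeSet_addApex, ncard_circOp_apex_neighbors,
      ncard_edgeSet_subdivide h2, ncard_edgeSet_subdivide h1, ncard_edgeSet_subdivide hxy, ih]
    omega
  | subd _ hH hxy hG ih =>
    have := hH.finite
    rw [hG.some.ncard_edgeSet_eq, ncard_edgeSet_subdivide hxy, ih]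
    ring

theorem MemF.deleteEdgeFVSCardLE (h : MemF i j G) : DeleteEdgeFVSCardLE G j := by
  induction h with
  | cycle hi h => exact (deleteEdgeFVSCardLE_cyc hi).of_iso h.some
  | k4 h =>
    have hsupp : ∀ u : ZMod 3, u ∈ (cyc 3).support := fun u => (mem_support _).2 ⟨u + 1, by
      rw [cyc_adj]; revert u; decide⟩
    exact ((deleteEdgeFVSCardLE_cyc le_rfl).addApex (hsupp 1) (hsupp 2)).of_iso
      (h.some.trans topFinFourIsoAddApexCyc)
  | circ hj _ hxy he1 he2 hG ih =>
    obtain ⟨_, _, _, _, h1, h2, ⟨φ⟩⟩ := hG.exists_iso he1 he2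
    have := (((ih.subdivide hxy).subdivide h1).subdivide h2).addApex (a := some (some none))
      (some_mem_support_subdivide (none_mem_support_subdivide _ _ _) _ _)
      (none_mem_support_subdivide _ _ _)
    rw [Nat.sub_add_cancel (by omega)] at this
    exact this.of_iso φ
  | subd _ _ hxy hG ih => exact (ih.subdivide hxy).of_iso hG.some

end MemF

theorem statement11_general (g : ℕ) (i j : ℕ)
    {V : Type} (G : SimpleGraph V) (hG : MemF i j G) :
    ∀ e ∈ G.edgeSet,
      (fvs (G.deleteEdges {e}) : ℝ) ≤
        tg g * G.edgeSet.ncard +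
          max (1 - (j : ℝ) * (5 * tg g - 1) - (i : ℝ) * tg g) 0 - 1 := by
  intro e he
  have hfvs : (fvs (G.deleteEdges {e}) : ℝ) ≤ j := by
    exact_mod_cast (hG.deleteEdgeFVSCardLE e he).fvs_le
  rw [hG.ncard_edgeSet]
  push_cast
  linarith [le_max_left (1 - (j : ℝ) * (5 * tg g - 1) - (i : ℝ) * tg g) 0]

/-- for `G ∈ F_{i,j}` and any edge `e`,
`φ(G - e) ≤ t_g |E(G)| + ε_g(G) - 1`. -/
theorem statement11 (g : ℕ) (hg : g = 4 ∨ g = 5) (i j : ℕ) (hi : 1 ≤ i) (hj : j ≤ i)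
    {V : Type} [Fintype V] (G : SimpleGraph V) (hG : MemF i j G) :
    ∀ e ∈ G.edgeSet,
      (fvs (G.deleteEdges {e}) : ℝ) ≤
        tg g * G.edgeSet.ncard +
          max (1 - (j : ℝ) * (5 * tg g - 1) - (i : ℝ) * tg g) 0 - 1 :=
  statement11_general g i j G hG

end InducedForest
end

section
/- Let G be a cubic graph with girth at least 5 such that for every vertex v of G and every pair a, b of distinct neighbors of v, the graph G − v contains two vertex-disjoint cycles of length 5, one containing a and the other containing b. Then no two distinct 5-cycles of G share more than one edge, and every edge of G is contained in exactly two cycles of length 5. -/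
open SimpleGraph

namespace InducedForest

section Statement16Aux

variable {V : Type} {G : SimpleGraph V}

/-- A quintuple of vertices forming a 5-cycle. -/
def IsC5 (G : SimpleGraph V) (a b c d e : V) : Prop :=
  G.Adj a b ∧ G.Adj b c ∧ G.Adj c d ∧ G.Adj d e ∧ G.Adj e a ∧
  a ≠ c ∧ a ≠ d ∧ b ≠ d ∧ b ≠ e ∧ c ≠ e

/-- Membership in a quintuple. -/
def MemC5 {V : Type} (x a b c d e : V) : Prop := x = a ∨ x = b ∨ x = c ∨ x = d ∨ x = e

/-- The edges of a quintuple. -/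
def EdgeC5 {V : Type} (f : Sym2 V) (a b c d e : V) : Prop :=
  f = s(a,b) ∨ f = s(b,c) ∨ f = s(c,d) ∨ f = s(d,e) ∨ f = s(e,a)

/-- Two presentations of the same 5-cycle. -/
def SameC5 {V : Type} (a b c d e a' b' c' d' e' : V) : Prop :=
  (∀ y, MemC5 y a' b' c' d' e' ↔ MemC5 y a b c d e) ∧
  (∀ f, EdgeC5 f a' b' c' d' e' ↔ EdgeC5 f a b c d e)

/-- The cleaned form of the disjoint-5-cycles hypothesis. -/
def Hyp (G : SimpleGraph V) : Prop :=
  ∀ v a b : V, G.Adj v a → G.Adj v b → a ≠ b →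
    ∃ a1 a2 a3 a4 a5 b1 b2 b3 b4 b5 : V,
      IsC5 G a1 a2 a3 a4 a5 ∧ IsC5 G b1 b2 b3 b4 b5 ∧
      (∀ x, MemC5 x a1 a2 a3 a4 a5 → x ≠ v) ∧
      (∀ x, MemC5 x b1 b2 b3 b4 b5 → x ≠ v) ∧
      MemC5 a a1 a2 a3 a4 a5 ∧ MemC5 b b1 b2 b3 b4 b5 ∧
      (∀ x, MemC5 x a1 a2 a3 a4 a5 → ¬ MemC5 x b1 b2 b3 b4 b5)

lemma rot1 {a b c d e : V} (h : IsC5 G a b c d e) :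
    IsC5 G b c d e a ∧ SameC5 a b c d e b c d e a := by
  obtain ⟨h1,h2,h3,h4,h5,n1,n2,n3,n4,n5⟩ := h
  refine ⟨⟨h2,h3,h4,h5,h1,n3,n4,n5,n1.symm,n2.symm⟩, ?_, ?_⟩
  · intro y; unfold MemC5; tauto
  · intro f; unfold EdgeC5; tauto

lemma refl1 {a b c d e : V} (h : IsC5 G a b c d e) :
    IsC5 G a e d c b ∧ SameC5 a b c d e a e d c b := by
  obtain ⟨h1,h2,h3,h4,h5,n1,n2,n3,n4,n5⟩ := h
  refine ⟨⟨h5.symm,h4.symm,h3.symm,h2.symm,h1.symm,n2,n1,n5.symm,n4.symm,n3.symm⟩, ?_, ?_⟩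
  · intro y; unfold MemC5; tauto
  · intro f; unfold EdgeC5
    rw [Sym2.eq_swap (a := a) (b := e), Sym2.eq_swap (a := e) (b := d),
      Sym2.eq_swap (a := d) (b := c), Sym2.eq_swap (a := c) (b := b),
      Sym2.eq_swap (a := b) (b := a)]
    tauto

lemma SameC5.trans {a b c d e a' b' c' d' e' a'' b'' c'' d'' e'' : V}
    (h1 : SameC5 a b c d e a' b' c' d' e')
    (h2 : SameC5 a' b' c' d' e' a'' b'' c'' d'' e'') :
    SameC5 a b c d e a'' b'' c'' d'' e'' :=
  ⟨fun y => (h2.1 y).trans (h1.1 y), fun f => (h2.2 f).trans (h1.2 f)⟩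

lemma start_at {a b c d e x : V} (h : IsC5 G a b c d e) (hx : MemC5 x a b c d e) :
    ∃ p q r s, IsC5 G x p q r s ∧ SameC5 a b c d e x p q r s := by
  have R1 := rot1 h
  have R2 := rot1 R1.1
  have R3 := rot1 R2.1
  have R4 := rot1 R3.1
  rcases hx with rfl | rfl | rfl | rfl | rfl
  · exact ⟨b, c, d, e, h, fun _ => Iff.rfl, fun _ => Iff.rfl⟩
  · exact ⟨c, d, e, a, R1.1, R1.2⟩
  · exact ⟨d, e, a, b, R2.1, R1.2.trans R2.2⟩
  · exact ⟨e, a, b, c, R3.1, (R1.2.trans R2.2).trans R3.2⟩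
  · exact ⟨a, b, c, d, R4.1, ((R1.2.trans R2.2).trans R3.2).trans R4.2⟩

lemma edge_start {a b c d e x y : V} (h : IsC5 G a b c d e)
    (hf : EdgeC5 s(x,y) a b c d e) :
    ∃ q r s, IsC5 G x y q r s ∧ SameC5 a b c d e x y q r s := by
  have R1 := rot1 h
  have R2 := rot1 R1.1
  have R3 := rot1 R2.1
  have R4 := rot1 R3.1
  have S1 : SameC5 a b c d e b c d e a := R1.2
  have S2 : SameC5 a b c d e c d e a b := R1.2.trans R2.2
  have S3 : SameC5 a b c d e d e a b c := S2.trans R3.2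
  have S4 : SameC5 a b c d e e a b c d := S3.trans R4.2
  have F0 := refl1 h
  have F1 := refl1 R1.1
  have F2 := refl1 R2.1
  have F3 := refl1 R3.1
  have F4 := refl1 R4.1
  rcases hf with hf | hf | hf | hf | hf <;> rw [Sym2.eq_iff] at hf <;>
    rcases hf with ⟨rfl, rfl⟩ | ⟨rfl, rfl⟩
  · exact ⟨c, d, e, h, fun _ => Iff.rfl, fun _ => Iff.rfl⟩
  · exact ⟨e, d, c, F1.1, S1.trans F1.2⟩
  · exact ⟨d, e, a, R1.1, S1⟩
  · exact ⟨a, e, d, F2.1, S2.trans F2.2⟩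
  · exact ⟨e, a, b, R2.1, S2⟩
  · exact ⟨b, a, e, F3.1, S3.trans F3.2⟩
  · exact ⟨a, b, c, R3.1, S3⟩
  · exact ⟨c, b, a, F4.1, S4.trans F4.2⟩
  · exact ⟨b, c, d, R4.1, S4⟩
  · exact ⟨d, c, b, F0.1, F0.2⟩

lemma edge_mem {a b c d e : V} {x y : V} (hf : EdgeC5 s(x,y) a b c d e) :
    MemC5 x a b c d e ∧ MemC5 y a b c d e := by
  unfold MemC5
  rcases hf with hf | hf | hf | hf | hf <;> rw [Sym2.eq_iff] at hf <;>
    rcases hf with ⟨rfl, rfl⟩ | ⟨rfl, rfl⟩ <;> tauto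

lemma parse5 {v : V} (c : G.Walk v v) (hc : c.IsCycle) (h5 : c.length = 5) :
    ∃ b cc d e, IsC5 G v b cc d e ∧ (∀ x, x ∈ c.support ↔ MemC5 x v b cc d e) ∧
      (∀ f, f ∈ c.edges ↔ EdgeC5 f v b cc d e) := by
  obtain ⟨b1, h1, c, rfl⟩ : ∃ (b : V) (h : G.Adj v b) (p : G.Walk b v),
      c = Walk.cons h p := by
    cases c with
    | nil => simp at h5
    | cons h p => exact ⟨_, h, p, rfl⟩
  obtain ⟨b2, h2, c, rfl⟩ : ∃ (b2 : V) (h : G.Adj b1 b2) (p : G.Walk b2 v),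
      c = Walk.cons h p := by
    cases c with
    | nil => simp at h5
    | cons h p => exact ⟨_, h, p, rfl⟩
  obtain ⟨b3, h3, c, rfl⟩ : ∃ (b3 : V) (h : G.Adj b2 b3) (p : G.Walk b3 v),
      c = Walk.cons h p := by
    cases c with
    | nil => simp at h5
    | cons h p => exact ⟨_, h, p, rfl⟩
  obtain ⟨b4, h4, c, rfl⟩ : ∃ (b4 : V) (h : G.Adj b3 b4) (p : G.Walk b4 v),
      c = Walk.cons h p := by
    cases c with
    | nil => simp at h5
    | cons h p => exact ⟨_, h, p, rfl⟩
  obtain ⟨b5, h5a, c, rfl⟩ : ∃ (b5 : V) (h : G.Adj b4 b5) (p : G.Walk b5 v),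
      c = Walk.cons h p := by
    cases c with
    | nil => simp at h5
    | cons h p => exact ⟨_, h, p, rfl⟩
  have hlen : c.length = 0 := by simpa using h5
  obtain rfl : b5 = v := by
    cases c with
    | nil => rfl
    | cons h p => simp at hlen
  obtain rfl : c = Walk.nil := by
    cases c with
    | nil => rfl
    | cons h p => simp at hlen
  have hnd := hc.2
  simp [Walk.support_cons] at hnd
  obtain ⟨⟨n12,n13,n14,n15⟩,⟨n23,n24,n25⟩,⟨n34,n35⟩,n45⟩ := hnd
  refine ⟨b1, b2, b3, b4, ⟨h1, h2, h3, h4, h5a, fun h => n25 h.symm, fun h => n35 h.symm,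
    n13, n14, n24⟩, ?_, ?_⟩
  · intro x
    simp only [Walk.support_cons, Walk.support_nil, List.mem_cons, MemC5,
      List.mem_singleton, List.not_mem_nil]
    tauto
  · intro f
    simp only [Walk.edges_cons, Walk.edges_nil, List.mem_cons, EdgeC5,
      List.mem_singleton, List.not_mem_nil]
    tauto

lemma build5 {a b c d e : V} (h : IsC5 G a b c d e) :
    ∃ w : G.Walk a a, w.IsCycle ∧ w.length = 5 ∧
      (∀ f, f ∈ w.edges ↔ EdgeC5 f a b c d e) := by
  obtain ⟨h1,h2,h3,h4,h5,n1,n2,n3,n4,n5⟩ := h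
  refine ⟨Walk.cons h1 (Walk.cons h2 (Walk.cons h3 (Walk.cons h4
    (Walk.cons h5 Walk.nil)))), ?_, by simp, ?_⟩
  · rw [Walk.isCycle_def]
    refine ⟨?_, by simp, ?_⟩
    · rw [Walk.isTrail_def]
      simp only [Walk.edges_cons, Walk.edges_nil, List.nodup_cons, List.mem_cons,
        List.not_mem_nil, or_false, List.nodup_nil, and_true, Sym2.eq_iff]
      have := h1.ne; have := h2.ne; have := h3.ne; have := h4.ne; have := h5.ne
      aesop
    · simp only [Walk.support_cons, Walk.support_nil, List.tail_cons, List.nodup_cons,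
        List.mem_cons, List.not_mem_nil, or_false, List.mem_singleton, List.nodup_nil,
        and_true]
      have := h1.ne; have := h5.ne'
      aesop
  · intro f
    simp only [Walk.edges_cons, Walk.edges_nil, List.mem_cons, EdgeC5,
      List.not_mem_nil, or_false]

lemma no3 (hg : 5 ≤ G.egirth) {a b c : V} (hab : G.Adj a b) (hbc : G.Adj b c)
    (hca : G.Adj c a) : False := by
  have hcyc : (Walk.cons hab (Walk.cons hbc (Walk.cons hca Walk.nil))).IsCycle := by
    rw [Walk.isCycle_def]
    refine ⟨?_, by simp, ?_⟩
    · rw [Walk.isTrail_def]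
      simp only [Walk.edges_cons, Walk.edges_nil, List.nodup_cons, List.mem_cons,
        List.not_mem_nil, or_false, List.nodup_nil, and_true, Sym2.eq_iff]
      have := hab.ne; have := hbc.ne; have := hca.ne
      aesop
    · simp only [Walk.support_cons, Walk.support_nil, List.tail_cons, List.nodup_cons,
        List.mem_cons, List.not_mem_nil, or_false, List.mem_singleton, List.nodup_nil,
        and_true]
      have := hbc.ne; have := hca.ne; have := hab.ne
      aesop
  have := le_egirth.mp hg _ _ hcyc
  simp only [Walk.length_cons, Walk.length_nil] at this
  norm_num at this

lemma no4 (hg : 5 ≤ G.egirth) {a b c d : V} (hab : G.Adj a b) (hbc : G.Adj b c)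
    (hcd : G.Adj c d) (hda : G.Adj d a) (hac : a ≠ c) (hbd : b ≠ d) : False := by
  have hcyc : (Walk.cons hab (Walk.cons hbc (Walk.cons hcd
      (Walk.cons hda Walk.nil)))).IsCycle := by
    rw [Walk.isCycle_def]
    refine ⟨?_, by simp, ?_⟩
    · rw [Walk.isTrail_def]
      simp only [Walk.edges_cons, Walk.edges_nil, List.nodup_cons, List.mem_cons,
        List.not_mem_nil, or_false, List.nodup_nil, and_true, Sym2.eq_iff]
      have := hab.ne; have := hbc.ne; have := hcd.ne; have := hda.ne
      aesop
    · simp only [Walk.support_cons, Walk.support_nil, List.tail_cons, List.nodup_cons,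
        List.mem_cons, List.not_mem_nil, or_false, List.mem_singleton, List.nodup_nil,
        and_true]
      have := hbc.ne; have := hcd.ne; have := hab.ne; have := hda.ne'
      aesop
  have := le_egirth.mp hg _ _ hcyc
  simp only [Walk.length_cons, Walk.length_nil] at this
  norm_num at this

lemma nbr_finite (hc : Cubic G) (a : V) : (G.neighborSet a).Finite := by
  rcases Set.finite_or_infinite (G.neighborSet a) with h | h
  · exact h
  · have := h.ncard
    rw [hc a] at this
    omega

lemma cubic_mem (hc : Cubic G) {a n1 n2 n3 : V} (h1 : G.Adj a n1) (h2 : G.Adj a n2)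
    (h3 : G.Adj a n3) (d12 : n1 ≠ n2) (d13 : n1 ≠ n3) (d23 : n2 ≠ n3) :
    ∀ q, G.Adj a q → q = n1 ∨ q = n2 ∨ q = n3 := by
  intro q hq
  by_contra hcon
  push_neg at hcon
  obtain ⟨e1, e2, e3⟩ := hcon
  have hsub : ({q, n1, n2, n3} : Set V) ⊆ G.neighborSet a := by
    rintro x (rfl | rfl | rfl | rfl) <;> assumption
  have h4 : ({q, n1, n2, n3} : Set V).ncard = 4 := by
    rw [Set.ncard_insert_of_notMem (by simp [e1, e2, e3])
        ((Set.finite_singleton n3).insert n2 |>.insert n1),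
      Set.ncard_insert_of_notMem (by simp [d12, d13])
        ((Set.finite_singleton n3).insert n2),
      Set.ncard_insert_of_notMem (by simp [d23]) (Set.finite_singleton n3),
      Set.ncard_singleton]
  have := Set.ncard_le_ncard hsub (nbr_finite hc a)
  rw [h4, hc a] at this
  omega

lemma cubic_third (hc : Cubic G) {a n1 n2 : V} (h1 : G.Adj a n1) (h2 : G.Adj a n2)
    (d12 : n1 ≠ n2) : ∃ n3, G.Adj a n3 ∧ n3 ≠ n1 ∧ n3 ≠ n2 := by
  by_contra hcon
  push_neg at hcon
  have hsub : G.neighborSet a ⊆ {n1, n2} := by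
    intro q hq
    rcases eq_or_ne q n1 with rfl | hh1
    · exact Set.mem_insert _ _
    · right; exact hcon q hq hh1
  have := Set.ncard_le_ncard hsub ((Set.finite_singleton n2).insert n1)
  rw [hc a] at this
  have h2' : ({n1, n2} : Set V).ncard ≤ 2 := by
    apply le_trans (Set.ncard_insert_le _ _)
    simp
  omega

lemma cubic_second (hc : Cubic G) {a n1 : V} (h1 : G.Adj a n1) :
    ∃ n2, G.Adj a n2 ∧ n2 ≠ n1 := by
  by_contra hcon
  push_neg at hcon
  have hsub : G.neighborSet a ⊆ {n1} := fun q hq => hcon q hq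
  have := Set.ncard_le_ncard hsub (Set.finite_singleton n1)
  rw [hc a, Set.ncard_singleton] at this
  omega

lemma mem_five {a b c d e u1 u2 u3 u4 u5 : V}
    (m1 : MemC5 u1 a b c d e) (m2 : MemC5 u2 a b c d e) (m3 : MemC5 u3 a b c d e)
    (m4 : MemC5 u4 a b c d e) (m5 : MemC5 u5 a b c d e)
    (d12 : u1 ≠ u2) (d13 : u1 ≠ u3) (d14 : u1 ≠ u4) (d15 : u1 ≠ u5)
    (d23 : u2 ≠ u3) (d24 : u2 ≠ u4) (d25 : u2 ≠ u5)
    (d34 : u3 ≠ u4) (d35 : u3 ≠ u5) (d45 : u4 ≠ u5) :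
    ∀ x, MemC5 x a b c d e → MemC5 x u1 u2 u3 u4 u5 := by
  have hSfin : ({u1, u2, u3, u4, u5} : Set V).Finite := by
    exact ((((Set.finite_singleton u5).insert u4).insert u3).insert u2).insert u1
  have hTfin : ({a, b, c, d, e} : Set V).Finite :=
    ((((Set.finite_singleton e).insert d).insert c).insert b).insert a
  have hsub : ({u1, u2, u3, u4, u5} : Set V) ⊆ {a, b, c, d, e} := by
    rintro x (rfl | rfl | rfl | rfl | rfl) <;>
      [exact m1; exact m2; exact m3; exact m4; exact m5]
  have hS : ({u1, u2, u3, u4, u5} : Set V).ncard = 5 := by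
    rw [Set.ncard_insert_of_notMem (by simp [d12, d13, d14, d15])
        ((((Set.finite_singleton u5).insert u4).insert u3).insert u2),
      Set.ncard_insert_of_notMem (by simp [d23, d24, d25])
        (((Set.finite_singleton u5).insert u4).insert u3),
      Set.ncard_insert_of_notMem (by simp [d34, d35])
        ((Set.finite_singleton u5).insert u4),
      Set.ncard_insert_of_notMem (by simp [d45]) (Set.finite_singleton u5),
      Set.ncard_singleton]
  have hT : ({a, b, c, d, e} : Set V).ncard ≤ 5 := by
    apply le_trans (Set.ncard_insert_le _ _)
    have : ({b, c, d, e} : Set V).ncard ≤ 4 := by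
      apply le_trans (Set.ncard_insert_le _ _)
      have : ({c, d, e} : Set V).ncard ≤ 3 := by
        apply le_trans (Set.ncard_insert_le _ _)
        have : ({d, e} : Set V).ncard ≤ 2 := by
          apply le_trans (Set.ncard_insert_le _ _)
          simp
        omega
      omega
    omega
  have heq := Set.eq_of_subset_of_ncard_le hsub (by omega) hTfin
  intro x hx
  have hxT : x ∈ ({a, b, c, d, e} : Set V) := by
    rcases hx with rfl | rfl | rfl | rfl | rfl <;> simp
  rw [← heq] at hxT
  exact hxT

lemma force (hcub : Cubic G) {a b c d e p n1 n2 n3 : V} (hC : IsC5 G a b c d e)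
    (hp : MemC5 p a b c d e) (h1 : G.Adj p n1) (h2 : G.Adj p n2) (h3 : G.Adj p n3)
    (d12 : n1 ≠ n2) (d13 : n1 ≠ n3) (d23 : n2 ≠ n3)
    (hn1 : ¬ MemC5 n1 a b c d e) :
    EdgeC5 s(p,n2) a b c d e ∧ EdgeC5 s(p,n3) a b c d e ∧
      MemC5 n2 a b c d e ∧ MemC5 n3 a b c d e := by
  obtain ⟨B, C, D, E, hC', hS⟩ := start_at hC hp
  have hadjB : G.Adj p B := hC'.1
  have hadjE : G.Adj p E := hC'.2.2.2.2.1.symm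
  have hBE : B ≠ E := hC'.2.2.2.2.2.2.2.2.1
  have hBmem : MemC5 B a b c d e := (hS.1 B).mp (Or.inr (Or.inl rfl))
  have hEmem : MemC5 E a b c d e := (hS.1 E).mp (Or.inr (Or.inr (Or.inr (Or.inr rfl))))
  have hBcase := cubic_mem hcub h1 h2 h3 d12 d13 d23 B hadjB
  have hEcase := cubic_mem hcub h1 h2 h3 d12 d13 d23 E hadjE
  have hB : B = n2 ∨ B = n3 := by
    rcases hBcase with rfl | rfl | rfl
    · exact absurd hBmem hn1
    · exact Or.inl rfl
    · exact Or.inr rfl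
  have hE : E = n2 ∨ E = n3 := by
    rcases hEcase with rfl | rfl | rfl
    · exact absurd hEmem hn1
    · exact Or.inl rfl
    · exact Or.inr rfl
  have e1 : EdgeC5 s(p,B) a b c d e := (hS.2 _).mp (Or.inl rfl)
  have e2 : EdgeC5 s(p,E) a b c d e := (hS.2 _).mp (by
    right; right; right; right; exact Sym2.eq_swap)
  rcases hB with rfl | rfl
  · rcases hE with rfl | rfl
    · exact absurd rfl hBE
    · exact ⟨e1, e2, hBmem, hEmem⟩
  · rcases hE with rfl | rfl
    · exact ⟨e2, e1, hEmem, hBmem⟩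
    · exact absurd rfl hBE

lemma isC5_val {S : Set V} {a b c d e : S} (h : IsC5 (G.induce S) a b c d e) :
    IsC5 G a.1 b.1 c.1 d.1 e.1 := by
  obtain ⟨h1,h2,h3,h4,h5,n1,n2,n3,n4,n5⟩ := h
  exact ⟨h1, h2, h3, h4, h5,
    fun hh => n1 (Subtype.ext hh), fun hh => n2 (Subtype.ext hh),
    fun hh => n3 (Subtype.ext hh), fun hh => n4 (Subtype.ext hh),
    fun hh => n5 (Subtype.ext hh)⟩

lemma h_clean
    (h : ∀ v a b : V, G.Adj v a → G.Adj v b → a ≠ b →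
      ∃ (x y : {u : V // u ≠ v}) (c1 : (G.induce {u | u ≠ v}).Walk x x)
        (c2 : (G.induce {u | u ≠ v}).Walk y y),
        c1.IsCycle ∧ c2.IsCycle ∧ c1.length = 5 ∧ c2.length = 5 ∧
        (∃ ha : a ≠ v, (⟨a, ha⟩ : {u : V // u ≠ v}) ∈ c1.support) ∧
        (∃ hb : b ≠ v, (⟨b, hb⟩ : {u : V // u ≠ v}) ∈ c2.support) ∧
        ∀ z, z ∈ c1.support → z ∉ c2.support)
    {v a b : V} (hva : G.Adj v a) (hvb : G.Adj v b) (hab : a ≠ b) :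
    ∃ a1 a2 a3 a4 a5 b1 b2 b3 b4 b5 : V,
      IsC5 G a1 a2 a3 a4 a5 ∧ IsC5 G b1 b2 b3 b4 b5 ∧
      (∀ x, MemC5 x a1 a2 a3 a4 a5 → x ≠ v) ∧
      (∀ x, MemC5 x b1 b2 b3 b4 b5 → x ≠ v) ∧
      MemC5 a a1 a2 a3 a4 a5 ∧ MemC5 b b1 b2 b3 b4 b5 ∧
      (∀ x, MemC5 x a1 a2 a3 a4 a5 → ¬ MemC5 x b1 b2 b3 b4 b5) := by
  obtain ⟨x, y, c1, c2, hc1, hc2, hl1, hl2, ⟨ha', hamem⟩, ⟨hb', hbmem⟩, hdisj⟩ :=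
    h v a b hva hvb hab
  obtain ⟨p2, p3, p4, p5, hP, hPsup, -⟩ := parse5 c1 hc1 hl1
  obtain ⟨q2, q3, q4, q5, hQ, hQsup, -⟩ := parse5 c2 hc2 hl2
  refine ⟨x.1, p2.1, p3.1, p4.1, p5.1, y.1, q2.1, q3.1, q4.1, q5.1,
    isC5_val hP, isC5_val hQ, ?_, ?_, ?_, ?_, ?_⟩
  · rintro z (rfl | rfl | rfl | rfl | rfl) <;> [exact x.2; exact p2.2; exact p3.2;
      exact p4.2; exact p5.2]
  · rintro z (rfl | rfl | rfl | rfl | rfl) <;> [exact y.2; exact q2.2; exact q3.2;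
      exact q4.2; exact q5.2]
  · have := (hPsup _).mp hamem
    rcases this with h' | h' | h' | h' | h' <;>
      [left; (right; left); (right; right; left); (right;right;right;left);
       (right;right;right;right)] <;> exact congrArg Subtype.val h'
  · have := (hQsup _).mp hbmem
    rcases this with h' | h' | h' | h' | h' <;>
      [left; (right; left); (right; right; left); (right;right;right;left);
       (right;right;right;right)] <;> exact congrArg Subtype.val h'
  · intro z hz1 hz2
    have hzP : ∃ P : {u : V // u ≠ v}, P.1 = z ∧ P ∈ c1.support := by
      rcases hz1 with h' | h' | h' | h' | h' <;> subst h'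
      · exact ⟨x, rfl, (hPsup _).mpr (Or.inl rfl)⟩
      · exact ⟨p2, rfl, (hPsup _).mpr (Or.inr (Or.inl rfl))⟩
      · exact ⟨p3, rfl, (hPsup _).mpr (Or.inr (Or.inr (Or.inl rfl)))⟩
      · exact ⟨p4, rfl, (hPsup _).mpr (Or.inr (Or.inr (Or.inr (Or.inl rfl))))⟩
      · exact ⟨p5, rfl, (hPsup _).mpr (Or.inr (Or.inr (Or.inr (Or.inr rfl))))⟩
    have hzQ : ∃ Q : {u : V // u ≠ v}, Q.1 = z ∧ Q ∈ c2.support := by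
      rcases hz2 with h' | h' | h' | h' | h' <;> subst h'
      · exact ⟨y, rfl, (hQsup _).mpr (Or.inl rfl)⟩
      · exact ⟨q2, rfl, (hQsup _).mpr (Or.inr (Or.inl rfl))⟩
      · exact ⟨q3, rfl, (hQsup _).mpr (Or.inr (Or.inr (Or.inl rfl)))⟩
      · exact ⟨q4, rfl, (hQsup _).mpr (Or.inr (Or.inr (Or.inr (Or.inl rfl))))⟩
      · exact ⟨q5, rfl, (hQsup _).mpr (Or.inr (Or.inr (Or.inr (Or.inr rfl))))⟩
    obtain ⟨P, hPz, hPmem⟩ := hzP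
    obtain ⟨Q, hQz, hQmem⟩ := hzQ
    have : P = Q := Subtype.ext (hPz.trans hQz.symm)
    exact hdisj P hPmem (this ▸ hQmem)

lemma two_shared_adj (hcub : Cubic G) (hg : 5 ≤ G.egirth) (H : Hyp G)
    {u v w x y x' y' : V} (hC1 : IsC5 G u v w x y) (hC2 : IsC5 G u v w x' y')
    (hxx' : x ≠ x') : False := by
  obtain ⟨huv, hvw, hwx, hxy, hyu, nuw, nux, nvx, nvy, nwy⟩ := hC1
  obtain ⟨-, -, hwx', hx'y', hy'u, -, nux', nvx', nvy', nwy'⟩ := hC2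
  -- basic derived distinctness
  have nyy' : y ≠ y' := by
    rintro rfl
    exact no4 hg hxy hx'y'.symm hwx'.symm hwx hxx' nwy.symm
  have nxy' : x ≠ y' := by
    rintro rfl
    exact no4 hg huv hvw hwx hy'u nuw nvx
  have nyx' : y ≠ x' := by
    rintro rfl
    exact no4 hg huv hvw hwx' hyu nuw nvy
  have hyy'na : ¬ G.Adj y y' := fun hadj => no3 hg hadj hy'u hyu.symm
  -- third neighbours
  obtain ⟨z, hvz, nzu, nzw⟩ := cubic_third hcub huv.symm hvw nuw
  obtain ⟨τ, hyτ, nτu, nτx⟩ := cubic_third hcub hyu hxy.symm nux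
  obtain ⟨τ', hy'τ', nτ'u, nτ'x'⟩ := cubic_third hcub hy'u hx'y'.symm nux'
  obtain ⟨σ, hxσ, nσy, nσw⟩ := cubic_third hcub hxy hwx.symm nwy.symm
  obtain ⟨σ', hx'σ', nσ'y', nσ'w⟩ := cubic_third hcub hx'y' hwx'.symm nwy'.symm
  -- full neighbourhoods
  have Nu := cubic_mem hcub huv hyu.symm hy'u.symm nvy nvy' nyy'
  have Nw := cubic_mem hcub hvw.symm hwx hwx' nvx nvx' hxx'
  have Nv := cubic_mem hcub huv.symm hvw hvz nuw nzu.symm nzw.symm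
  have Ny := cubic_mem hcub hyu hxy.symm hyτ nux nτu.symm nτx.symm
  have Ny' := cubic_mem hcub hy'u hx'y'.symm hy'τ' nux' nτ'u.symm nτ'x'.symm
  -- Step D : disjoint 5-cycles through u and w avoiding v; get τ ~ τ'
  obtain ⟨A1, A2, A3, A4, A5, B1, B2, B3, B4, B5, hA, hB, hAv, hBv, hAu, hBw, hABd⟩ :=
    H v u w huv.symm hvw nuw
  obtain ⟨-, -, hAy, hAy'⟩ := force hcub hA hAu huv hyu.symm hy'u.symm nvy nvy' nyy'
    (fun hm => hAv v hm rfl)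
  obtain ⟨-, -, hBx, hBx'⟩ := force hcub hB hBw hvw.symm hwx hwx' nvx nvx' hxx'
    (fun hm => hBv v hm rfl)
  obtain ⟨-, -, -, hAτ⟩ := force hcub hA hAy hxy.symm hyu hyτ nux.symm nτx.symm nτu.symm
    (fun hm => hABd x hm hBx)
  obtain ⟨-, -, -, hAτ'⟩ := force hcub hA hAy' hx'y'.symm hy'u hy'τ'
    nux'.symm nτ'x'.symm nτ'u.symm (fun hm => hABd x' hm hBx')
  have nyτ' : y ≠ τ' := by
    rintro rfl
    exact hyy'na hy'τ'.symm
  have ny'τ : y' ≠ τ := by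
    rintro rfl
    exact hyy'na hyτ
  have nττ' : τ ≠ τ' := by
    rintro rfl
    exact no4 hg hyu hy'u.symm hy'τ' hyτ.symm nyy' nτu.symm
  have hfiveA := mem_five hAu hAy hAy' hAτ hAτ' hyu.ne' hy'u.ne' nτu.symm nτ'u.symm
    nyy' hyτ.ne nyτ' ny'τ hy'τ'.ne nττ'
  have htt' : G.Adj τ τ' := by
    obtain ⟨B', C', D', E', hCτ, hSτ⟩ := start_at hA hAτ
    have hadjB' : G.Adj τ B' := hCτ.1
    have hadjE' : G.Adj τ E' := hCτ.2.2.2.2.1.symm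
    have hB'E' : B' ≠ E' := hCτ.2.2.2.2.2.2.2.2.1
    have hB'A : MemC5 B' A1 A2 A3 A4 A5 := (hSτ.1 B').mp (Or.inr (Or.inl rfl))
    have hE'A : MemC5 E' A1 A2 A3 A4 A5 :=
      (hSτ.1 E').mp (Or.inr (Or.inr (Or.inr (Or.inr rfl))))
    have notu : ¬ G.Adj τ u := by
      intro hadj
      rcases Nu τ hadj.symm with rfl | rfl | rfl
      · exact hAv τ hAτ rfl
      · exact hyτ.ne rfl
      · exact ny'τ rfl
    have noty' : ¬ G.Adj τ y' := by
      intro hadj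
      rcases Ny' τ hadj.symm with rfl | rfl | rfl
      · exact nτu rfl
      · exact hABd τ hAτ hBx'
      · exact nττ' rfl
    have hB'cases : B' = y ∨ B' = τ' := by
      rcases hfiveA B' hB'A with rfl | rfl | rfl | rfl | rfl
      · exact absurd hadjB' notu
      · exact Or.inl rfl
      · exact absurd hadjB' noty'
      · exact absurd rfl hadjB'.ne
      · exact Or.inr rfl
    have hE'cases : E' = y ∨ E' = τ' := by
      rcases hfiveA E' hE'A with rfl | rfl | rfl | rfl | rfl
      · exact absurd hadjE' notu
      · exact Or.inl rfl
      · exact absurd hadjE' noty'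
      · exact absurd rfl hadjE'.ne
      · exact Or.inr rfl
    rcases hB'cases with rfl | rfl
    · rcases hE'cases with rfl | rfl
      · exact absurd rfl hB'E'
      · exact hadjE'
    · exact hadjB'
  -- Step F : at y with (u, x); get z ~ τ'
  obtain ⟨P1, P2, P3, P4, P5, Q1, Q2, Q3, Q4, Q5, hP, hQ, hPy, hQy, hPu, hQx, hPQd⟩ :=
    H y u x hyu hxy.symm nux
  obtain ⟨-, -, hPv, hPy'⟩ := force hcub hP hPu hyu.symm huv hy'u.symm
    nvy.symm nyy' nvy' (fun hm => hPy y hm rfl)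
  obtain ⟨-, -, hQw, hQσ⟩ := force hcub hQ hQx hxy hwx.symm hxσ
    nwy.symm nσy.symm nσw.symm (fun hm => hQy y hm rfl)
  obtain ⟨-, -, -, hPz⟩ := force hcub hP hPv hvw huv.symm hvz
    nuw.symm nzw.symm nzu.symm (fun hm => hPQd w hm hQw)
  obtain ⟨-, -, -, hQx'⟩ := force hcub hQ hQw hvw.symm hwx hwx' nvx nvx' hxx'
    (fun hm => hPQd v hPv hm)
  obtain ⟨-, -, -, hPτ'⟩ := force hcub hP hPy' hx'y'.symm hy'u hy'τ'
    nux'.symm nτ'x'.symm nτ'u.symm (fun hm => hPQd x' hm hQx')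
  have nvτ' : v ≠ τ' := by
    rintro rfl
    exact no3 hg huv hy'τ'.symm hy'u
  have ny'z : y' ≠ z := by
    rintro rfl
    exact no3 hg huv hvz hy'u
  have nτ'z : τ' ≠ z := by
    rintro rfl
    exact no4 hg hvz.symm huv.symm hy'u.symm hy'τ' nzu nvy'
  have hfiveP := mem_five hPv hPu hPy' hPτ' hPz huv.ne' nvy' nvτ' hvz.ne
    hy'u.ne' nτ'u.symm nzu.symm hy'τ'.ne ny'z nτ'z
  have hzτ' : G.Adj z τ' := by
    obtain ⟨B', C', D', E', hCz, hSz⟩ := start_at hP hPz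
    have hadjB' : G.Adj z B' := hCz.1
    have hadjE' : G.Adj z E' := hCz.2.2.2.2.1.symm
    have hB'E' : B' ≠ E' := hCz.2.2.2.2.2.2.2.2.1
    have hB'P : MemC5 B' P1 P2 P3 P4 P5 := (hSz.1 B').mp (Or.inr (Or.inl rfl))
    have hE'P : MemC5 E' P1 P2 P3 P4 P5 :=
      (hSz.1 E').mp (Or.inr (Or.inr (Or.inr (Or.inr rfl))))
    have notu : ¬ G.Adj z u := by
      intro hadj
      rcases Nu z hadj.symm with rfl | rfl | rfl
      · exact hvz.ne rfl
      · exact hPy z hPz rfl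
      · exact ny'z rfl
    have noty' : ¬ G.Adj z y' := by
      intro hadj
      rcases Ny' z hadj.symm with rfl | rfl | rfl
      · exact nzu rfl
      · exact hPQd z hPz hQx'
      · exact nτ'z rfl
    have hB'cases : B' = v ∨ B' = τ' := by
      rcases hfiveP B' hB'P with rfl | rfl | rfl | rfl | rfl
      · exact Or.inl rfl
      · exact absurd hadjB' notu
      · exact absurd hadjB' noty'
      · exact Or.inr rfl
      · exact absurd rfl hadjB'.ne
    have hE'cases : E' = v ∨ E' = τ' := by
      rcases hfiveP E' hE'P with rfl | rfl | rfl | rfl | rfl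
      · exact Or.inl rfl
      · exact absurd hadjE' notu
      · exact absurd hadjE' noty'
      · exact Or.inr rfl
      · exact absurd rfl hadjE'.ne
    rcases hB'cases with rfl | rfl
    · rcases hE'cases with rfl | rfl
      · exact absurd rfl hB'E'
      · exact hadjE'
    · exact hadjB'
  -- Step F' : at y' with (u, x'); get z ~ τ
  obtain ⟨P1, P2, P3, P4, P5, Q1, Q2, Q3, Q4, Q5, hP, hQ, hPy', hQy', hPu, hQx', hPQd⟩ :=
    H y' u x' hy'u hx'y'.symm nux'
  obtain ⟨-, -, hPv, hPyy⟩ := force hcub hP hPu hy'u.symm huv hyu.symm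
    nvy'.symm nyy'.symm nvy (fun hm => hPy' y' hm rfl)
  obtain ⟨-, -, hQw, hQσ'⟩ := force hcub hQ hQx' hx'y' hwx'.symm hx'σ'
    nwy'.symm nσ'y'.symm nσ'w.symm (fun hm => hQy' y' hm rfl)
  obtain ⟨-, -, -, hPz⟩ := force hcub hP hPv hvw huv.symm hvz
    nuw.symm nzw.symm nzu.symm (fun hm => hPQd w hm hQw)
  obtain ⟨-, -, -, hQxx⟩ := force hcub hQ hQw hvw.symm hwx' hwx nvx' nvx hxx'.symm
    (fun hm => hPQd v hPv hm)
  obtain ⟨-, -, -, hPτ⟩ := force hcub hP hPyy hxy.symm hyu hyτ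
    nux.symm nτx.symm nτu.symm (fun hm => hPQd x hm hQxx)
  have nvτ : v ≠ τ := by
    rintro rfl
    exact no3 hg huv hyτ.symm hyu
  have nyz : y ≠ z := by
    rintro rfl
    exact no3 hg huv hvz hyu
  have nτz : τ ≠ z := by
    rintro rfl
    exact no4 hg hvz.symm huv.symm hyu.symm hyτ nzu nvy
  have hfiveP' := mem_five hPv hPu hPyy hPτ hPz huv.ne' nvy nvτ hvz.ne
    hyu.ne' nτu.symm nzu.symm hyτ.ne nyz nτz
  have hzτ : G.Adj z τ := by
    obtain ⟨B', C', D', E', hCz, hSz⟩ := start_at hP hPz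
    have hadjB' : G.Adj z B' := hCz.1
    have hadjE' : G.Adj z E' := hCz.2.2.2.2.1.symm
    have hB'E' : B' ≠ E' := hCz.2.2.2.2.2.2.2.2.1
    have hB'P : MemC5 B' P1 P2 P3 P4 P5 := (hSz.1 B').mp (Or.inr (Or.inl rfl))
    have hE'P : MemC5 E' P1 P2 P3 P4 P5 :=
      (hSz.1 E').mp (Or.inr (Or.inr (Or.inr (Or.inr rfl))))
    have notu : ¬ G.Adj z u := by
      intro hadj
      rcases Nu z hadj.symm with rfl | rfl | rfl
      · exact hvz.ne rfl
      · exact nyz rfl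
      · exact hPy' z hPz rfl
    have noty : ¬ G.Adj z y := by
      intro hadj
      rcases Ny z hadj.symm with rfl | rfl | rfl
      · exact nzu rfl
      · exact hPQd z hPz hQxx
      · exact nτz rfl
    have hB'cases : B' = v ∨ B' = τ := by
      rcases hfiveP' B' hB'P with rfl | rfl | rfl | rfl | rfl
      · exact Or.inl rfl
      · exact absurd hadjB' notu
      · exact absurd hadjB' noty
      · exact Or.inr rfl
      · exact absurd rfl hadjB'.ne
    have hE'cases : E' = v ∨ E' = τ := by
      rcases hfiveP' E' hE'P with rfl | rfl | rfl | rfl | rfl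
      · exact Or.inl rfl
      · exact absurd hadjE' notu
      · exact absurd hadjE' noty
      · exact Or.inr rfl
      · exact absurd rfl hadjE'.ne
    rcases hB'cases with rfl | rfl
    · rcases hE'cases with rfl | rfl
      · exact absurd rfl hB'E'
      · exact hadjE'
    · exact hadjB'
  exact no3 hg htt' hzτ'.symm hzτ

lemma sharedA (hcub : Cubic G) (hg : 5 ≤ G.egirth) (H : Hyp G)
    {u v w x y : V} (hC1 : IsC5 G u v w x y)
    {a b c d e : V} (hC2 : IsC5 G a b c d e)
    (hne : ¬ ∀ f, EdgeC5 f a b c d e ↔ EdgeC5 f u v w x y)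
    (h1 : EdgeC5 s(u,v) a b c d e) (h2 : EdgeC5 s(v,w) a b c d e) : False := by
  obtain ⟨p, q, r, hR, hS⟩ := edge_start hC2 h1
  have h2' : EdgeC5 s(v,w) u v p q r := (hS.2 _).mpr h2
  have huv := hC1.1
  have hvw := hC1.2.1
  have nuw := hC1.2.2.2.2.2.1
  obtain rfl : w = p := by
    rcases h2' with hh | hh | hh | hh | hh <;> rw [Sym2.eq_iff] at hh <;>
      rcases hh with ⟨h3, h4⟩ | ⟨h3, h4⟩
    · exact absurd h3 huv.ne'
    · exact absurd h4 nuw.symm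
    · exact h4
    · exact absurd h3 hR.2.1.ne
    · exact absurd h3 hR.2.1.ne
    · exact absurd h3 hR.2.2.2.2.2.2.2.1
    · exact absurd h3 hR.2.2.2.2.2.2.2.1
    · exact absurd h3 hR.2.2.2.2.2.2.2.2.1
    · exact absurd h3 hR.2.2.2.2.2.2.2.2.1
    · exact absurd h3 huv.ne'
  rcases eq_or_ne x q with rfl | hxq
  · rcases eq_or_ne y r with rfl | hyr
    · exact hne fun f => ((hS.2 f).symm)
    · exact no4 hg hC1.2.2.2.2.1.symm hC1.2.2.2.1.symm hR.2.2.2.1 hR.2.2.2.2.1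
        hC1.2.2.2.2.2.2.1 hyr
  · exact two_shared_adj hcub hg H hC1 hR hxq

lemma part1 [Fintype V] (hcub : Cubic G) (hg : 5 ≤ G.egirth) (H : Hyp G) :
    ∀ (u w : V) (c1 : G.Walk u u) (c2 : G.Walk w w), c1.IsCycle → c2.IsCycle →
      c1.length = 5 → c2.length = 5 → {e | e ∈ c1.edges} ≠ {e | e ∈ c2.edges} →
      ({e | e ∈ c1.edges} ∩ {e | e ∈ c2.edges}).ncard ≤ 1 := by
  intro u w c1 c2 hc1 hc2 hl1 hl2 hsets
  by_contra hgt
  push_neg at hgt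
  have hfin : ({e | e ∈ c1.edges} ∩ {e | e ∈ c2.edges}).Finite :=
    (c1.edges.finite_toSet).subset Set.inter_subset_left
  obtain ⟨f1, hf1, f2, hf2, hne12⟩ := (Set.one_lt_ncard hfin).mp hgt
  obtain ⟨P2, P3, P4, P5, hP, hPsup, hPe⟩ := parse5 c1 hc1 hl1
  obtain ⟨Q2, Q3, Q4, Q5, hQ, hQsup, hQe⟩ := parse5 c2 hc2 hl2
  have hf1P : EdgeC5 f1 u P2 P3 P4 P5 := (hPe f1).mp hf1.1
  have hf1Q : EdgeC5 f1 w Q2 Q3 Q4 Q5 := (hQe f1).mp hf1.2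
  have hf2P : EdgeC5 f2 u P2 P3 P4 P5 := (hPe f2).mp hf2.1
  have hf2Q : EdgeC5 f2 w Q2 Q3 Q4 Q5 := (hQe f2).mp hf2.2
  -- we may write f1 = s(m,n)
  clear hf1 hf2
  -- obtain explicit form of f1
  obtain ⟨m, n, rfl⟩ : ∃ m n, f1 = s(m,n) := by
    rcases hf1P with hh | hh | hh | hh | hh <;> exact ⟨_, _, hh⟩
  obtain ⟨c, d, e, hC1, hS1⟩ := edge_start hP hf1P
  obtain ⟨p, q, r, hC2, hS2⟩ := edge_start hQ hf1Q
  have hf2C1 : EdgeC5 f2 m n c d e := (hS1.2 f2).mpr hf2P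
  have hf2C2 : EdgeC5 f2 m n p q r := (hS2.2 f2).mpr hf2Q
  -- distinct edge sets, at the level of the representations
  have hneA : ¬ ∀ f, EdgeC5 f m n p q r ↔ EdgeC5 f m n c d e := by
    intro hall
    apply hsets
    ext f
    constructor
    · intro hf
      exact (hQe f).mpr ((hS2.2 f).mp ((hall f).mpr ((hS1.2 f).mpr ((hPe f).mp hf))))
    · intro hf
      exact (hPe f).mpr ((hS1.2 f).mp ((hall f).mp ((hS2.2 f).mpr ((hQe f).mp hf))))
  -- rotations of the first representation
  have R1 := rot1 hC1
  have R2 := rot1 R1.1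
  have R3 := rot1 R2.1
  have R4 := rot1 R3.1
  have hrot4 : SameC5 m n c d e e m n c d := ((R1.2.trans R2.2).trans R3.2).trans R4.2
  have hneA4 : ¬ ∀ f, EdgeC5 f m n p q r ↔ EdgeC5 f e m n c d := by
    intro hall
    exact hneA fun f => (hall f).trans (hrot4.2 f)
  rcases hf2C1 with h | h | h | h | h
  · exact hne12 h.symm
  · subst h
    exact sharedA hcub hg H hC1 hC2 hneA (Or.inl rfl) hf2C2
  · subst h
    rcases hf2C2 with hh | hh | hh | hh | hh <;> rw [Sym2.eq_iff] at hh <;>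
      rcases hh with ⟨h3, h4⟩ | ⟨h3, h4⟩
    · exact hC1.2.2.2.2.2.1 h3.symm
    · exact hC1.2.2.2.2.2.2.1 h4.symm
    · exact hC1.2.1.ne h3.symm
    · exact hC1.2.2.2.2.2.2.2.1 h4.symm
    · subst h3; subst h4
      exact sharedA hcub hg H hC1 hC2 hneA (Or.inl rfl) (Or.inr (Or.inl rfl))
    · subst h3; subst h4
      exact no3 hg hC1.2.1 hC1.2.2.1 hC2.2.1.symm
    · subst h3; subst h4
      exact no3 hg hC1.2.2.2.1 hC1.2.2.2.2.1 hC2.2.2.2.2.1.symm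
    · subst h3; subst h4
      exact no3 hg hC1.1 hC1.2.1 hC2.2.2.2.2.1
    · exact hC1.2.2.2.2.2.2.1 h4.symm
    · exact hC1.2.2.2.2.2.1 h3.symm
  · subst h
    rcases hf2C2 with hh | hh | hh | hh | hh <;> rw [Sym2.eq_iff] at hh <;>
      rcases hh with ⟨h3, h4⟩ | ⟨h3, h4⟩
    · exact hC1.2.2.2.2.2.2.1 h3.symm
    · exact hC1.2.2.2.2.2.2.2.1 h3.symm
    · exact hC1.2.2.2.2.2.2.2.1 h3.symm
    · exact hC1.2.2.2.2.2.2.2.2.1 h4.symm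
    · subst h3; subst h4
      exact no3 hg hC1.2.1 hC1.2.2.1 hC2.2.1.symm
    · subst h3; subst h4
      exact no3 hg hC1.1 hC2.2.1 hC1.2.2.2.2.1
    · subst h3; subst h4
      exact sharedA hcub hg H R4.1 hC2 hneA4
        (Or.inr (Or.inr (Or.inr (Or.inr rfl)))) (Or.inl rfl)
    · subst h3; subst h4
      exact no3 hg hC1.2.2.2.1 hC1.2.2.2.2.1 hC2.2.2.2.2.1.symm
    · exact hC1.2.2.2.2.1.ne h4
    · exact hC1.2.2.2.2.2.2.1 h3.symm
  · subst h
    exact sharedA hcub hg H R4.1 hC2 hneA4 hf2C2 (Or.inl rfl)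

lemma share2 [Fintype V]
    (p1 : ∀ (u w : V) (c1 : G.Walk u u) (c2 : G.Walk w w), c1.IsCycle → c2.IsCycle →
      c1.length = 5 → c2.length = 5 → {e | e ∈ c1.edges} ≠ {e | e ∈ c2.edges} →
      ({e | e ∈ c1.edges} ∩ {e | e ∈ c2.edges}).ncard ≤ 1)
    {u w : V} (c1 : G.Walk u u) (c2 : G.Walk w w) (hc1 : c1.IsCycle) (hc2 : c2.IsCycle)
    (hl1 : c1.length = 5) (hl2 : c2.length = 5)
    (hne : {e | e ∈ c1.edges} ≠ {e | e ∈ c2.edges})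
    {f1 f2 : Sym2 V} (h11 : f1 ∈ c1.edges) (h12 : f1 ∈ c2.edges)
    (h21 : f2 ∈ c1.edges) (h22 : f2 ∈ c2.edges) (hf : f1 ≠ f2) : False := by
  have hle := p1 u w c1 c2 hc1 hc2 hl1 hl2 hne
  have hsub : ({f1, f2} : Set (Sym2 V)) ⊆ {e | e ∈ c1.edges} ∩ {e | e ∈ c2.edges} := by
    rintro g (rfl | rfl)
    · exact ⟨h11, h12⟩
    · exact ⟨h21, h22⟩
  have hfin : ({e | e ∈ c1.edges} ∩ {e | e ∈ c2.edges}).Finite :=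
    (c1.edges.finite_toSet).subset Set.inter_subset_left
  have := Set.ncard_le_ncard hsub hfin
  rw [Set.ncard_pair hf] at this
  omega

lemma part2 [Fintype V] (hcub : Cubic G) (hg : 5 ≤ G.egirth) (H : Hyp G)
    (p1 : ∀ (u w : V) (c1 : G.Walk u u) (c2 : G.Walk w w), c1.IsCycle → c2.IsCycle →
      c1.length = 5 → c2.length = 5 → {e | e ∈ c1.edges} ≠ {e | e ∈ c2.edges} →
      ({e | e ∈ c1.edges} ∩ {e | e ∈ c2.edges}).ncard ≤ 1) :
    ∀ e ∈ G.edgeSet,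
      {C : Set (Sym2 V) | ∃ (v : V) (c : G.Walk v v), c.IsCycle ∧ c.length = 5 ∧
        e ∈ c.edges ∧ C = {e' | e' ∈ c.edges}}.ncard = 2 := by
  intro e he
  induction e using Sym2.ind with
  | _ u v =>
  have huv : G.Adj u v := he
  obtain ⟨a, hua, nav⟩ := cubic_second hcub huv
  obtain ⟨b, hub, nbv, nba⟩ := cubic_third hcub huv hua nav.symm
  obtain ⟨p, hvp, npu⟩ := cubic_second hcub huv.symm
  obtain ⟨q, hvq, nqu, nqp⟩ := cubic_third hcub huv.symm hvp npu.symm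
  have Nv := cubic_mem hcub huv.symm hvp hvq npu.symm nqu.symm nqp.symm
  -- first 5-cycle through uv : avoid a
  obtain ⟨a2, haa2, na2u⟩ := cubic_second hcub hua.symm
  obtain ⟨A1, A2, A3, A4, A5, _, _, _, _, _, hA, -, hAne, -, hAu, -, -⟩ :=
    H a u a2 hua.symm haa2 na2u.symm
  obtain ⟨eAuv, eAub, -, -⟩ := force hcub hA hAu hua huv hub nav nba.symm nbv.symm
    (fun hm => hAne a hm rfl)
  obtain ⟨wA, hwAc, hwAl, hwAe⟩ := build5 hA
  -- second 5-cycle through uv : avoid b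
  obtain ⟨b2, hbb2, nb2u⟩ := cubic_second hcub hub.symm
  obtain ⟨B1, B2, B3, B4, B5, _, _, _, _, _, hB, -, hBne, -, hBu, -, -⟩ :=
    H b u b2 hub.symm hbb2 nb2u.symm
  obtain ⟨eBuv, eBua, -, -⟩ := force hcub hB hBu hub huv hua nbv nba nav.symm
    (fun hm => hBne b hm rfl)
  obtain ⟨wB, hwBc, hwBl, hwBe⟩ := build5 hB
  have hE1S : ({e' | e' ∈ wA.edges} : Set (Sym2 V)) ∈
      {C : Set (Sym2 V) | ∃ (v1 : V) (c : G.Walk v1 v1), c.IsCycle ∧ c.length = 5 ∧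
        s(u,v) ∈ c.edges ∧ C = {e' | e' ∈ c.edges}} :=
    ⟨A1, wA, hwAc, hwAl, (hwAe _).mpr eAuv, rfl⟩
  have hE2S : ({e' | e' ∈ wB.edges} : Set (Sym2 V)) ∈
      {C : Set (Sym2 V) | ∃ (v1 : V) (c : G.Walk v1 v1), c.IsCycle ∧ c.length = 5 ∧
        s(u,v) ∈ c.edges ∧ C = {e' | e' ∈ c.edges}} :=
    ⟨B1, wB, hwBc, hwBl, (hwBe _).mpr eBuv, rfl⟩
  have hE12 : ({e' | e' ∈ wA.edges} : Set (Sym2 V)) ≠ {e' | e' ∈ wB.edges} := by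
    intro hEq
    have h1 : s(u,a) ∈ wB.edges := (hwBe _).mpr eBua
    have h2 : s(u,a) ∈ wA.edges := by
      have : s(u,a) ∈ ({e' | e' ∈ wB.edges} : Set (Sym2 V)) := h1
      rw [← hEq] at this
      exact this
    exact hAne a (edge_mem ((hwAe _).mp h2)).2 rfl
  have hsecond : ∀ C : Set (Sym2 V), C ∈
      {C : Set (Sym2 V) | ∃ (v1 : V) (c : G.Walk v1 v1), c.IsCycle ∧ c.length = 5 ∧
        s(u,v) ∈ c.edges ∧ C = {e' | e' ∈ c.edges}} →
      ∃ (v0 : V) (c : G.Walk v0 v0) (t : V), c.IsCycle ∧ c.length = 5 ∧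
        C = {e' | e' ∈ c.edges} ∧ (t = p ∨ t = q) ∧ s(u,v) ∈ c.edges ∧
        s(v,t) ∈ c.edges ∧ s(u,v) ≠ s(v,t) := by
    rintro C ⟨v0, c, hcyc, hlen, hec, rfl⟩
    obtain ⟨R2, R3, R4, R5, hR, hRs, hRe⟩ := parse5 c hcyc hlen
    have h1 : EdgeC5 s(u,v) v0 R2 R3 R4 R5 := (hRe _).mp hec
    obtain ⟨r3, r4, r5, hRep, hSame⟩ := edge_start hR h1
    have hadj : G.Adj v r3 := hRep.2.1
    have hne3 : r3 ≠ u := fun h => hRep.2.2.2.2.2.1 h.symm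
    have ht : r3 = p ∨ r3 = q := by
      rcases Nv r3 hadj with h | h | h
      · exact absurd h hne3
      · exact Or.inl h
      · exact Or.inr h
    refine ⟨v0, c, r3, hcyc, hlen, rfl, ht, hec, ?_, ?_⟩
    · exact (hRe _).mpr ((hSame.2 _).mp (Or.inr (Or.inl rfl)))
    · intro heq
      rw [Sym2.eq_iff] at heq
      rcases heq with ⟨h3, -⟩ | ⟨h3, -⟩
      · exact huv.ne h3
      · exact hne3 h3.symm
  rw [Set.ncard_eq_two]
  refine ⟨{e' | e' ∈ wA.edges}, {e' | e' ∈ wB.edges}, hE12, ?_⟩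
  ext C
  constructor
  · intro hC
    by_contra hnotin
    rw [Set.mem_insert_iff, Set.mem_singleton_iff] at hnotin
    push_neg at hnotin
    obtain ⟨hCA, hCB⟩ := hnotin
    obtain ⟨v0, c, t, hcyc, hlen, hCeq, ht, hm1, hm2, hne0⟩ := hsecond C hC
    obtain ⟨vA, cA, tA, hcycA, hlenA, hAeq, htA, hmA1, hmA2, hne0A⟩ := hsecond _ hE1S
    obtain ⟨vB, cB, tB, hcycB, hlenB, hBeq, htB, hmB1, hmB2, hne0B⟩ := hsecond _ hE2S
    have hneCA : {e | e ∈ c.edges} ≠ {e | e ∈ cA.edges} := by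
      rw [← hAeq, ← hCeq]; exact hCA
    have hneCB : {e | e ∈ c.edges} ≠ {e | e ∈ cB.edges} := by
      rw [← hBeq, ← hCeq]; exact hCB
    have hneAB : {e | e ∈ cA.edges} ≠ {e | e ∈ cB.edges} := by
      rw [← hAeq, ← hBeq]; exact hE12
    rcases ht with rfl | rfl <;> rcases htA with h | h <;> rcases htB with h' | h'
    · exact share2 p1 c cA hcyc hcycA hlen hlenA hneCA hm1 hmA1 hm2
        (h ▸ hmA2) hne0
    · exact share2 p1 c cA hcyc hcycA hlen hlenA hneCA hm1 hmA1 hm2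
        (h ▸ hmA2) hne0
    · exact share2 p1 c cB hcyc hcycB hlen hlenB hneCB hm1 hmB1 hm2
        (h' ▸ hmB2) hne0
    · exact share2 p1 cA cB hcycA hcycB hlenA hlenB hneAB hmA1 hmB1
        (h ▸ hmA2) (h' ▸ hmB2) (h ▸ hne0A)
    · exact share2 p1 cA cB hcycA hcycB hlenA hlenB hneAB hmA1 hmB1
        (h ▸ hmA2) (h' ▸ hmB2) (h ▸ hne0A)
    · exact share2 p1 c cB hcyc hcycB hlen hlenB hneCB hm1 hmB1 hm2
        (h' ▸ hmB2) hne0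
    · exact share2 p1 c cA hcyc hcycA hlen hlenA hneCA hm1 hmA1 hm2
        (h ▸ hmA2) hne0
    · exact share2 p1 c cA hcyc hcycA hlen hlenA hneCA hm1 hmA1 hm2
        (h ▸ hmA2) hne0
  · rintro (rfl | rfl)
    · exact hE1S
    · exact hE2S

end Statement16Aux

/-- in a cubic graph of girth at least 5 satisfying the disjoint-5-cycles
condition, no two distinct 5-cycles share more than one edge, and every edge lies in
exactly two 5-cycles. -/
theorem statement16 {V : Type} [Fintype V] (G : SimpleGraph V)
    (hcubic : Cubic G) (hgirth : 5 ≤ G.egirth)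
    (h : ∀ v a b : V, G.Adj v a → G.Adj v b → a ≠ b →
      ∃ (x y : {u : V // u ≠ v}) (c1 : (G.induce {u | u ≠ v}).Walk x x)
        (c2 : (G.induce {u | u ≠ v}).Walk y y),
        c1.IsCycle ∧ c2.IsCycle ∧ c1.length = 5 ∧ c2.length = 5 ∧
        (∃ ha : a ≠ v, (⟨a, ha⟩ : {u : V // u ≠ v}) ∈ c1.support) ∧
        (∃ hb : b ≠ v, (⟨b, hb⟩ : {u : V // u ≠ v}) ∈ c2.support) ∧
        ∀ z, z ∈ c1.support → z ∉ c2.support) :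
    (∀ (u w : V) (c1 : G.Walk u u) (c2 : G.Walk w w), c1.IsCycle → c2.IsCycle →
      c1.length = 5 → c2.length = 5 → {e | e ∈ c1.edges} ≠ {e | e ∈ c2.edges} →
      ({e | e ∈ c1.edges} ∩ {e | e ∈ c2.edges}).ncard ≤ 1) ∧
    (∀ e ∈ G.edgeSet,
      {C : Set (Sym2 V) | ∃ (v : V) (c : G.Walk v v), c.IsCycle ∧ c.length = 5 ∧
        e ∈ c.edges ∧ C = {e' | e' ∈ c.edges}}.ncard = 2) := by
  have H : Hyp G := fun v a b hva hvb hab => h_clean h hva hvb hab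
  have p1 := part1 hcubic hgirth H
  exact ⟨p1, part2 hcubic hgirth H p1⟩

end InducedForest
end
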